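/- arXiv:math/0403381 — 9 statements merged into one kernel-verified Lean document; each statement's English description precedes it below -/
import Mathlib

section
/- Let J ⊆ ℝ be an open interval, x₀ ∈ J, and let M, U : J → Matrix (Fin 2) (Fin 2) ℂ be twice continuously differentiable maps such that det (M x) = 1 for all x ∈ J, U x belongs to SU(2) (i.e. U x is unitary with determinant 1) for all x ∈ J, and trace (M x) = trace (U x) for all x ∈ J. Suppose there is ε ∈ {1, -1} with M x₀ = ε • (1 : Matrix (Fin 2) (Fin 2) ℂ) and that the derivative M' x₀ is nilpotent (equivalently, (M' x₀)² = 0). Then U x₀ = ε • 1 and U' x₀ = 0. -/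
attribute [local instance] Matrix.normedAddCommGroup Matrix.normedSpace

/-!
A unitary matrix `U` with `tr U = n ε`, `|ε| = 1`, equals `ε • 1`, because the Frobenius norm
`tr ((U - ε)ᴴ (U - ε)) = 2n - 2 Re (ε̄ tr U)` vanishes; this gives `U x₀ = ε • 1`.
Differentiating `det M = 1` twice at `x₀` gives `ε tr M'' + 2 det M' = 0`, and `det M' = 0` since
`M'` is nilpotent, so `tr U'' = tr M'' = 0` at `x₀`. Differentiating `tr (Uᴴ U) = 2` twice then
gives `2 Re (ε̄ tr U'') + 2 tr (U'ᴴ U') = 0` at `x₀`, so the Frobenius norm of `U' x₀` vanishes.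
-/

open Filter Topology Matrix
open scoped ComplexOrder

section SecondDerivative

variable {𝕜 : Type*} [NontriviallyNormedField 𝕜]
  {E F G : Type*} [NormedAddCommGroup E] [NormedSpace 𝕜 E] [NormedAddCommGroup F]
  [NormedSpace 𝕜 F] [NormedAddCommGroup G] [NormedSpace 𝕜 G] {x : 𝕜}

theorem ContDiffAt.differentiableAt_deriv {f : 𝕜 → F} (hf : ContDiffAt 𝕜 2 f x) :
    DifferentiableAt 𝕜 (deriv f) x :=
  ((hf.fderiv_right (m := 1) le_rfl).clm_apply contDiffAt_const).differentiableAt one_ne_zero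

theorem ContinuousLinearMap.deriv_deriv_comp (L : E →L[𝕜] F) {f : 𝕜 → E}
    (hf : ContDiffAt 𝕜 2 f x) :
    deriv (deriv fun y => L (f y)) x = L (deriv (deriv f) x) := by
  have hfirst : deriv (fun y => L (f y)) =ᶠ[𝓝 x] fun y => L (deriv f y) := by
    filter_upwards [hf.eventually (by simp)] with y hy
    exact (L.hasFDerivAt.comp_hasDerivAt y (hy.differentiableAt two_ne_zero).hasDerivAt).deriv
  rw [hfirst.deriv_eq]
  exact (L.hasFDerivAt.comp_hasDerivAt x hf.differentiableAt_deriv.hasDerivAt).deriv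

theorem ContinuousLinearMap.deriv_deriv_of_bilinear (B : E →L[𝕜] F →L[𝕜] G) {u : 𝕜 → E}
    {v : 𝕜 → F} (hu : ContDiffAt 𝕜 2 u x) (hv : ContDiffAt 𝕜 2 v x) :
    deriv (deriv fun y => B (u y) (v y)) x =
      B (u x) (deriv (deriv v) x) + 2 • B (deriv u x) (deriv v x) + B (deriv (deriv u) x) (v x) := by
  have hfirst : deriv (fun y => B (u y) (v y)) =ᶠ[𝓝 x]
      fun y => B (u y) (deriv v y) + B (deriv u y) (v y) := by
    filter_upwards [hu.eventually (by simp), hv.eventually (by simp)] with y hu hv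
    exact B.deriv_of_bilinear (fun _ => hu.differentiableAt two_ne_zero)
      (fun _ => hv.differentiableAt two_ne_zero)
  have hu' := (hu.differentiableAt two_ne_zero).hasDerivAt
  have hv' := (hv.differentiableAt two_ne_zero).hasDerivAt
  have hu'' := hu.differentiableAt_deriv.hasDerivAt
  have hv'' := hv.differentiableAt_deriv.hasDerivAt
  rw [hfirst.deriv_eq, ((B.hasDerivAt_of_bilinear (fun _ => hu') (fun _ => hv'')).fun_add
    (B.hasDerivAt_of_bilinear (fun _ => hu'') (fun _ => hv'))).deriv]
  abel

-- Unbundled maps: a bundled map on matrices would carry `Matrix`'s own topology and module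
-- instances, which only unfold to the normed ones that `deriv` sees.
variable [CompleteSpace 𝕜] [FiniteDimensional 𝕜 E]

theorem IsLinearMap.deriv_deriv_eq_of_eventuallyEq {L : E → F} (hL : IsLinearMap 𝕜 L)
    {f g : 𝕜 → E} (hf : ContDiffAt 𝕜 2 f x) (hg : ContDiffAt 𝕜 2 g x)
    (h : (fun y => L (f y)) =ᶠ[𝓝 x] fun y => L (g y)) :
    L (deriv (deriv f) x) = L (deriv (deriv g) x) := by
  let L' := (hL.mk' L).toContinuousLinearMap
  exact (L'.deriv_deriv_comp hf).symm.trans (h.deriv.deriv_eq.trans (L'.deriv_deriv_comp hg))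

theorem IsBilinearMap.deriv_deriv_eq_zero_of_eventuallyEq_const [FiniteDimensional 𝕜 F]
    {B : E → F → G} (hB : IsBilinearMap 𝕜 B) {u : 𝕜 → E} {v : 𝕜 → F} (hu : ContDiffAt 𝕜 2 u x)
    (hv : ContDiffAt 𝕜 2 v x) {c : G} (h : (fun y => B (u y) (v y)) =ᶠ[𝓝 x] fun _ => c) :
    B (u x) (deriv (deriv v) x) + 2 • B (deriv u x) (deriv v x) + B (deriv (deriv u) x) (v x) =
      0 :=
  (hB.toContinuousBilinearMap.deriv_deriv_of_bilinear hu hv).symm.trans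
    (h.deriv.deriv_eq.trans (by simp))

end SecondDerivative

namespace Matrix

theorem eq_smul_one_of_mem_unitaryGroup_of_trace_eq {n : Type*} [Fintype n] [DecidableEq n]
    {U : Matrix n n ℂ} (hU : U ∈ unitaryGroup n ℂ) {ε : ℂ} (hε : star ε * ε = 1)
    (htr : U.trace = Fintype.card n * ε) : U = ε • 1 := by
  rw [← sub_eq_zero, ← trace_conjTranspose_mul_self_eq_zero_iff]
  have hUU : Uᴴ * U = 1 := mem_unitaryGroup_iff'.1 hU
  have : (U - ε • 1)ᴴ * (U - ε • 1) = (1 + star ε * ε) • 1 - (star ε • U + ε • Uᴴ) := by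
    simp only [conjTranspose_sub, conjTranspose_smul, conjTranspose_one, Matrix.sub_mul,
      Matrix.mul_sub, hUU, Matrix.smul_mul, Matrix.mul_smul, Matrix.one_mul, Matrix.mul_one]
    module
  rw [this, trace_sub, trace_add, trace_smul, trace_smul, trace_smul, trace_conjTranspose, htr,
    trace_one]
  simp only [star_mul', star_natCast, smul_eq_mul]
  linear_combination (-(Fintype.card n : ℂ)) * hε

theorem isBilinearMap_trace_conjTranspose_mul {m n : Type*} [Fintype m] [Fintype n] :
    IsBilinearMap ℝ fun A C : Matrix m n ℂ => (Aᴴ * C).trace where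
  add_left _ _ _ := by simp only [conjTranspose_add, Matrix.add_mul, trace_add]
  smul_left _ _ _ := by simp only [conjTranspose_smul, star_trivial, smul_mul, trace_smul]
  add_right _ _ _ := by simp only [Matrix.mul_add, trace_add]
  smul_right _ _ _ := by simp only [Matrix.mul_smul, trace_smul]

def detBilin (A C : Matrix (Fin 2) (Fin 2) ℂ) : ℂ := A 0 0 * C 1 1 - A 0 1 * C 1 0

theorem detBilin_self (A : Matrix (Fin 2) (Fin 2) ℂ) : detBilin A A = A.det :=
  (det_fin_two A).symm

theorem isBilinearMap_detBilin : IsBilinearMap ℝ detBilin where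
  add_left _ _ _ := by simp only [detBilin, add_apply]; ring
  smul_left _ _ _ := by simp only [detBilin, Matrix.smul_apply, Complex.real_smul]; ring
  add_right _ _ _ := by simp only [detBilin, add_apply]; ring
  smul_right _ _ _ := by simp only [detBilin, Matrix.smul_apply, Complex.real_smul]; ring

theorem mul_trace_deriv_deriv_add_two_mul_det_deriv_eq_zero {M : ℝ → Matrix (Fin 2) (Fin 2) ℂ}
    {x₀ : ℝ} {c ε : ℂ} (hM : ContDiffAt ℝ 2 M x₀) (hdet : ∀ᶠ x in 𝓝 x₀, (M x).det = c)
    (hM₀ : M x₀ = ε • 1) :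
    ε * (deriv (deriv M) x₀).trace + 2 * (deriv M x₀).det = 0 := by
  have h : detBilin (M x₀) (deriv (deriv M) x₀) + 2 • detBilin (deriv M x₀) (deriv M x₀)
      + detBilin (deriv (deriv M) x₀) (M x₀) = 0 :=
    isBilinearMap_detBilin.deriv_deriv_eq_zero_of_eventuallyEq_const hM hM
      (hdet.mono fun x hx => (detBilin_self (M x)).trans hx)
  rw [detBilin_self, hM₀] at h
  simp only [detBilin, Matrix.smul_apply, one_apply_eq, one_apply_ne, ne_eq, zero_ne_one,
    one_ne_zero, not_false_eq_true, smul_eq_mul, mul_one, mul_zero, sub_zero, nsmul_eq_mul,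
    Nat.cast_ofNat] at h
  rw [trace_fin_two]
  linear_combination h

theorem deriv_eq_zero_of_mem_unitaryGroup_of_trace_deriv_deriv_eq_zero {n : Type*} [Fintype n]
    [DecidableEq n] {U : ℝ → Matrix n n ℂ} {x₀ : ℝ} {ε : ℂ} (hU : ContDiffAt ℝ 2 U x₀)
    (hunit : ∀ᶠ x in 𝓝 x₀, U x ∈ unitaryGroup n ℂ) (hU₀ : U x₀ = ε • 1)
    (htr : (deriv (deriv U) x₀).trace = 0) :
    deriv U x₀ = 0 := by
  have h : ((U x₀)ᴴ * deriv (deriv U) x₀).trace + 2 • ((deriv U x₀)ᴴ * deriv U x₀).trace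
      + ((deriv (deriv U) x₀)ᴴ * U x₀).trace = 0 :=
    isBilinearMap_trace_conjTranspose_mul.deriv_deriv_eq_zero_of_eventuallyEq_const hU hU
      (hunit.mono fun x hx => congrArg trace (mem_unitaryGroup_iff'.1 hx))
  rw [hU₀, conjTranspose_smul, conjTranspose_one, Matrix.smul_mul, Matrix.one_mul,
    Matrix.mul_smul, Matrix.mul_one, trace_smul, trace_smul, trace_conjTranspose, htr] at h
  exact trace_conjTranspose_mul_self_eq_zero_iff.1 (by simpa using h)

end Matrix

/-- Lemma 2.2: if `M` has determinant one, `U` takes values in `SU(2)`, their traces agree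
on an open interval `J`, `M x₀ = ±Id`, and `M' x₀` is nilpotent, then `U x₀ = ±Id` and
`U' x₀ = 0`. -/
theorem unitrace (a b : ℝ) (J : Set ℝ) (hJ : J = Set.Ioo a b)
    (x₀ : ℝ) (hx₀ : x₀ ∈ J)
    (M U : ℝ → Matrix (Fin 2) (Fin 2) ℂ)
    (hM : ContDiffOn ℝ 2 M J) (hU : ContDiffOn ℝ 2 U J)
    (hdet : ∀ x ∈ J, (M x).det = 1)
    (hUsu : ∀ x ∈ J, U x ∈ Matrix.unitaryGroup (Fin 2) ℂ ∧ (U x).det = 1)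
    (htr : ∀ x ∈ J, (M x).trace = (U x).trace)
    (ε : ℂ) (hε : ε = 1 ∨ ε = -1)
    (hM0 : M x₀ = ε • (1 : Matrix (Fin 2) (Fin 2) ℂ))
    (hnil : (deriv M x₀) ^ 2 = 0) :
    U x₀ = ε • (1 : Matrix (Fin 2) (Fin 2) ℂ) ∧ deriv U x₀ = 0 := by
  have hJx₀ : J ∈ 𝓝 x₀ := (hJ ▸ isOpen_Ioo : IsOpen J).mem_nhds hx₀
  have hM₂ : ContDiffAt ℝ 2 M x₀ := hM.contDiffAt hJx₀
  have hU₂ : ContDiffAt ℝ 2 U x₀ := hU.contDiffAt hJx₀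
  have hεε : star ε * ε = 1 := by rcases hε with rfl | rfl <;> norm_num
  have hU₀ : U x₀ = ε • 1 := eq_smul_one_of_mem_unitaryGroup_of_trace_eq (hUsu x₀ hx₀).1 hεε
    (by rw [← htr x₀ hx₀, hM0, trace_smul, trace_one]; simp [mul_comm])
  have hdetM' : (deriv M x₀).det = 0 :=
    pow_eq_zero_iff two_ne_zero |>.1 (by rw [← det_pow, hnil, det_zero])
  have htrM : (deriv (deriv M) x₀).trace = 0 := by
    have h := mul_trace_deriv_deriv_add_two_mul_det_deriv_eq_zero hM₂
      (eventually_of_mem hJx₀ hdet) hM0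
    rw [hdetM', mul_zero, add_zero] at h
    exact (mul_eq_zero.1 h).resolve_left (by rintro rfl; simp at hεε)
  have htrU : (deriv (deriv U) x₀).trace = 0 :=
    (traceLinearMap _ ℝ ℂ).isLinear.deriv_deriv_eq_of_eventuallyEq hM₂ hU₂
      (eventuallyEq_of_mem hJx₀ htr) ▸ htrM
  exact ⟨hU₀, deriv_eq_zero_of_mem_unitaryGroup_of_trace_deriv_deriv_eq_zero hU₂
    (eventually_of_mem hJx₀ fun x hx => (hUsu x hx).1) hU₀ htrU⟩
end

section
/- Let M : ℝ → Matrix (Fin 2) (Fin 2) ℂ be twice differentiable at x₀ and on a neighbourhood of x₀, with det (M x) = 1 for all x near x₀, and suppose M x₀ = ε • (1 : Matrix (Fin 2) (Fin 2) ℂ) for some ε ∈ {1, -1}. Let τ(x) = (1/2)·trace (M x). Then τ'(x₀) = 0 and (M' x₀)² = ε·τ''(x₀) • (1 : Matrix (Fin 2) (Fin 2) ℂ). -/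
attribute [local instance] Matrix.normedAddCommGroup Matrix.normedSpace

/-!
Near `x₀` Cayley–Hamilton and `det M = 1` give `M² - 2τ • M + 1 = 0`. Differentiating once and
evaluating at `M x₀ = ε • 1`, `τ x₀ = ε` leaves `-2ετ'(x₀) • 1 = 0`; differentiating twice, the
`M''` terms cancel and what remains is `2 M'(x₀)² = 2ετ''(x₀) • 1`.
-/

open Filter Topology

theorem Matrix.sq_eq_trace_smul_sub_det_smul_one {R : Type*} [CommRing R]
    (A : Matrix (Fin 2) (Fin 2) R) : A ^ 2 = A.trace • A - A.det • 1 := by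
  nontriviality R
  have h := A.aeval_self_charpoly
  rw [Matrix.charpoly_fin_two] at h
  simp only [map_add, map_sub, map_mul, map_pow, Polynomial.aeval_X, Polynomial.aeval_C,
    Algebra.algebraMap_eq_smul_one, smul_mul_assoc, one_mul] at h
  rw [← sub_eq_zero, ← h]
  abel

theorem HasDerivAt.matrix_mul {𝕜 R : Type*} [NontriviallyNormedField 𝕜] [NormedRing R]
    [NormedAlgebra 𝕜 R] {l m n : Type*} [Fintype l] [Fintype m] [Fintype n]
    {A : 𝕜 → Matrix l m R} {B : 𝕜 → Matrix m n R} {A' : Matrix l m R} {B' : Matrix m n R}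
    {x : 𝕜} (hA : HasDerivAt A A' x) (hB : HasDerivAt B B' x) :
    HasDerivAt (fun y => A y * B y) (A' * B x + A x * B') x := by
  refine hasDerivAt_pi.2 fun i => hasDerivAt_pi.2 fun j => ?_
  have hA_entry := fun k => hasDerivAt_pi.1 (hasDerivAt_pi.1 hA i) k
  have hB_entry := fun k => hasDerivAt_pi.1 (hasDerivAt_pi.1 hB k) j
  simpa only [Matrix.mul_apply, Matrix.add_apply, Finset.sum_add_distrib] using
    HasDerivAt.fun_sum fun k _ => (hA_entry k).fun_mul (hB_entry k)

section Derivatives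

variable {𝕜 F : Type*} [NontriviallyNormedField 𝕜] [NormedAddCommGroup F] [NormedSpace 𝕜 F]
  {f : 𝕜 → F} {f' : F} {x : 𝕜}

theorem HasDerivAt.eq_zero_of_eventuallyEq_const {c : F} (hf : HasDerivAt f f' x)
    (h : f =ᶠ[𝓝 x] fun _ => c) : f' = 0 :=
  hf.unique ((hasDerivAt_const x c).congr_of_eventuallyEq h)

theorem ContDiffAt.eventually_hasDerivAt_deriv (hf : ContDiffAt 𝕜 2 f x) :
    ∀ᶠ y in 𝓝 x, HasDerivAt f (deriv f y) y :=
  (hf.eventually (by simp)).mono fun _ hy => (hy.differentiableAt two_ne_zero).hasDerivAt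

theorem ContDiffAt.hasDerivAt_deriv_deriv (hf : ContDiffAt 𝕜 2 f x) :
    HasDerivAt (deriv f) (deriv (deriv f) x) x :=
  ((hf.derivWithin (m := 1) (by norm_num)).differentiableAt one_ne_zero).hasDerivAt

end Derivatives

section QuadraticRelation

variable {𝕜 𝕂 : Type*} [NontriviallyNormedField 𝕜] [NormedField 𝕂] [NormedAlgebra 𝕜 𝕂]
  {n : Type*} [Fintype n] [DecidableEq n]
  {M : 𝕜 → Matrix n n 𝕂} {τ : 𝕜 → 𝕂} {x₀ : 𝕜} {ε : 𝕂}

theorem eventually_deriv_mul_add_mul_deriv_sub_eq_zero (hM : ContDiffAt 𝕜 2 M x₀)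
    (hτ : ContDiffAt 𝕜 2 τ x₀) (hquad : ∀ᶠ x in 𝓝 x₀, M x ^ 2 - (2 * τ x) • M x + 1 = 0) :
    ∀ᶠ x in 𝓝 x₀, deriv M x * M x + M x * deriv M x
      - ((2 * τ x) • deriv M x + (2 * deriv τ x) • M x) = 0 := by
  filter_upwards [hquad.eventually_nhds, hM.eventually_hasDerivAt_deriv,
    hτ.eventually_hasDerivAt_deriv] with x hx hMx hτx
  refine ((hMx.matrix_mul hMx).fun_sub ((hτx.const_mul 2).fun_smul hMx))
    |>.eq_zero_of_eventuallyEq_const (c := -1) ?_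
  filter_upwards [hx] with y hy
  rw [← sq]
  exact eq_neg_of_add_eq_zero_left hy

variable [CharZero 𝕂] [Nonempty n]

theorem deriv_eq_zero_of_sq_sub_smul_add_one_eq_zero (hM : ContDiffAt 𝕜 2 M x₀)
    (hτ : ContDiffAt 𝕜 2 τ x₀) (hquad : ∀ᶠ x in 𝓝 x₀, M x ^ 2 - (2 * τ x) • M x + 1 = 0)
    (hε : ε ≠ 0) (hM₀ : M x₀ = ε • 1) (hτ₀ : τ x₀ = ε) :
    deriv τ x₀ = 0 := by
  have h := (eventually_deriv_mul_add_mul_deriv_sub_eq_zero hM hτ hquad).self_of_nhds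
  rw [hM₀, hτ₀] at h
  simp only [Matrix.mul_smul, Matrix.smul_mul, mul_one, one_mul] at h
  have h_smul_one : (2 * ε * deriv τ x₀) • (1 : Matrix n n 𝕂) = 0 := by
    linear_combination (norm := module) -h
  simpa [hε] using h_smul_one

theorem deriv_sq_eq_of_sq_sub_smul_add_one_eq_zero (hM : ContDiffAt 𝕜 2 M x₀)
    (hτ : ContDiffAt 𝕜 2 τ x₀) (hquad : ∀ᶠ x in 𝓝 x₀, M x ^ 2 - (2 * τ x) • M x + 1 = 0)
    (hε : ε ≠ 0) (hM₀ : M x₀ = ε • 1) (hτ₀ : τ x₀ = ε) :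
    deriv M x₀ ^ 2 = (ε * deriv (deriv τ) x₀) • 1 := by
  -- The type ascriptions keep `deriv` elaborated with the same instances as in the goal.
  have hM' : HasDerivAt M (deriv M x₀) x₀ := hM.eventually_hasDerivAt_deriv.self_of_nhds
  have hM'' : HasDerivAt (deriv M) (deriv (deriv M) x₀) x₀ := hM.hasDerivAt_deriv_deriv
  have hτ' : HasDerivAt τ (deriv τ x₀) x₀ := hτ.eventually_hasDerivAt_deriv.self_of_nhds
  have hτ'' : HasDerivAt (deriv τ) (deriv (deriv τ) x₀) x₀ := hτ.hasDerivAt_deriv_deriv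
  have h := (((hM''.matrix_mul hM').fun_add (hM'.matrix_mul hM'')).fun_sub
      (((hτ'.const_mul 2).fun_smul hM'').fun_add ((hτ''.const_mul 2).fun_smul hM')))
    |>.eq_zero_of_eventuallyEq_const (eventually_deriv_mul_add_mul_deriv_sub_eq_zero hM hτ hquad)
  rw [hM₀, hτ₀, deriv_eq_zero_of_sq_sub_smul_add_one_eq_zero hM hτ hquad hε hM₀ hτ₀] at h
  simp only [Matrix.mul_smul, Matrix.smul_mul, mul_one, one_mul] at h
  rw [sq]
  linear_combination (norm := module) (1 / 2 : 𝕂) • h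

end QuadraticRelation

/-- Differentiating the Cayley–Hamilton identity: if `M` is twice continuously
differentiable near `x₀`, `det (M x) = 1` near `x₀` and `M x₀ = ε • Id` with `ε = ±1`, then
the half-trace `τ = (1/2)·tr M` satisfies `τ'(x₀) = 0` and `(M' x₀)² = ε·τ''(x₀) • Id`. -/
theorem cayley_hamilton_derivatives (M : ℝ → Matrix (Fin 2) (Fin 2) ℂ) (x₀ : ℝ)
    (hM : ContDiffAt ℝ 2 M x₀)
    (hdet : ∀ᶠ x in nhds x₀, (M x).det = 1)
    (ε : ℂ) (hε : ε = 1 ∨ ε = -1)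
    (hM0 : M x₀ = ε • (1 : Matrix (Fin 2) (Fin 2) ℂ)) :
    deriv (fun x => (1 / 2 : ℂ) * (M x).trace) x₀ = 0 ∧
    (deriv M x₀) ^ 2 =
      (ε * deriv (deriv (fun x => (1 / 2 : ℂ) * (M x).trace)) x₀) •
        (1 : Matrix (Fin 2) (Fin 2) ℂ) := by
  set τ : ℝ → ℂ := fun x => (1 / 2 : ℂ) * (M x).trace
  have hτ : ContDiffAt ℝ 2 τ x₀ := contDiffAt_const.mul
    ((Matrix.traceLinearMap (Fin 2) ℝ ℂ).toContinuousLinearMap.contDiff.contDiffAt.comp x₀ hM)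
  have hquad : ∀ᶠ x in 𝓝 x₀, M x ^ 2 - (2 * τ x) • M x + 1 = 0 := by
    filter_upwards [hdet] with x hx
    rw [Matrix.sq_eq_trace_smul_sub_det_smul_one, hx]
    simp [τ]
  have hε0 : ε ≠ 0 := by rcases hε with rfl | rfl <;> norm_num
  have hτ₀ : τ x₀ = ε := by simp [τ, hM0]; ring
  exact ⟨deriv_eq_zero_of_sq_sub_smul_add_one_eq_zero hM hτ hquad hε0 hM0 hτ₀,
    deriv_sq_eq_of_sq_sub_smul_add_one_eq_zero hM hτ hquad hε0 hM0 hτ₀⟩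
end

section
/- Consider the matrix ODE along a curve: for continuous functions f, g : [0,1] → ℂ and a parameter t ∈ ℂ, let X(s,t) ∈ Matrix (Fin 2) (Fin 2) ℂ solve ∂ₛX(s,t) = X(s,t)·[[0, t·f(s)],[g(s), 0]] with X(0,t) = Id, and set M(t) = X(1,t). Suppose ∫₀¹ g(s) ds = 0 and that the map t ↦ M(t) is differentiable at t = 0. Then M(0) = Id, and the map λ ↦ M(λ⁻¹(λ−1)²), defined for λ ∈ ℂ \ {0}, has derivative 0 at λ = 1 (hence the closing conditions M̃(1) = Id and d_λM̃(1) = 0 hold at the Sym point λ₀ = 1). -/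
/-!
At `t = 0` the potential is `g • E₁₀`, a multiple of the square-zero matrix unit `E₁₀`.
With `G(s) = ∫₀ˢ g`, the product `X(s, 0) (1 - G(s) • E₁₀)` then has derivative
`-G g • X E₁₀² = 0`, so it stays `1`; hence `X(s, 0) = 1 + G(s) • E₁₀` and `M(0) = 1` since
`G(1) = 0`. The reparametrization `λ ↦ λ⁻¹(λ - 1)²` vanishes to second order at `λ = 1`, so the
chain rule gives the derivative `0`.
-/

attribute [local instance] Matrix.normedAddCommGroup Matrix.normedSpace

open Set

theorem hasDerivWithinAt_intervalIntegral_Icc {E : Type*} [NormedAddCommGroup E]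
    [NormedSpace ℝ E] [CompleteSpace E] {g : ℝ → E} {a b s : ℝ}
    (hg : ContinuousOn g (Icc a b)) (hs : s ∈ Icc a b) :
    HasDerivWithinAt (fun u => ∫ x in a..u, g x) (g s) (Icc a b) s :=
  have : Fact (s ∈ Icc a b) := ⟨hs⟩
  intervalIntegral.integral_hasDerivWithinAt_right
    ((hg.mono (Icc_subset_Icc le_rfl hs.2)).intervalIntegrable_of_Icc hs.1)
    (hg.stronglyMeasurableAtFilter_nhdsWithin measurableSet_Icc s) (hg.continuousWithinAt hs)

theorem eq_one_add_integral_smul_of_hasDerivWithinAt {𝕜 n : Type*} [RCLike 𝕜] [Fintype n]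
    [DecidableEq n] {N : Matrix n n 𝕜} (hN : N * N = 0)
    {g : ℝ → 𝕜} {a b : ℝ} (hg : ContinuousOn g (Icc a b)) {Y : ℝ → Matrix n n 𝕜}
    (hY : ∀ s ∈ Icc a b, HasDerivWithinAt Y (g s • (Y s * N)) (Icc a b) s) (hYa : Y a = 1) :
    ∀ s ∈ Icc a b, Y s = 1 + (∫ x in a..s, g x) • N := by
  set G : ℝ → 𝕜 := fun u => ∫ x in a..u, g x
  have hYN : ∀ s ∈ Icc a b,
      HasDerivWithinAt (fun u => Y u * N) (g s • (Y s * N) * N) (Icc a b) s := fun s hs =>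
      (LinearMap.mulRight ℝ N).toContinuousLinearMap.hasFDerivAt.comp_hasDerivWithinAt s (hY s hs)
  have hZ : ∀ s ∈ Icc a b, HasDerivWithinAt (fun u => Y u - G u • (Y u * N)) 0 (Icc a b) s := by
    intro s hs
    have hG := hasDerivWithinAt_intervalIntegral_Icc hg hs
    refine ((hY s hs).sub (hG.smul (hYN s hs))).congr_deriv ?_
    rw [smul_mul_assoc, mul_assoc, hN]
    simp
  have hconst := constant_of_has_deriv_right_zero (fun s hs => (hZ s hs).continuousWithinAt)
    fun s hs => (hZ s (Ico_subset_Icc_self hs)).mono_of_mem_nhdsWithin (Icc_mem_nhdsGE_of_mem hs)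
  intro s hs
  have h1 : Y s - G s • (Y s * N) = 1 := by simpa [G, hYa] using hconst s hs
  have h2 : Y s * N = N := by
    rw [sub_eq_iff_eq_add] at h1
    rw [h1, add_mul, smul_mul_assoc, mul_assoc, hN]
    simp
  rw [← h2, ← h1, sub_add_cancel]

theorem hasDerivAt_inv_mul_sub_one_sq {𝕜 : Type*} [NontriviallyNormedField 𝕜] :
    HasDerivAt (fun l : 𝕜 => l⁻¹ * (l - 1) ^ 2) 0 1 := by
  have hinv : HasDerivAt (fun l : 𝕜 => l⁻¹) (-1) 1 := by
    simpa using hasDerivAt_inv (one_ne_zero (α := 𝕜))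
  have hsq : HasDerivAt (fun l : 𝕜 => (l - 1) ^ 2) 0 1 := by
    simpa [Pi.pow_def] using ((hasDerivAt_id (1 : 𝕜)).sub_const 1).pow 2
  simpa [Pi.mul_def] using hinv.mul hsq

theorem closing_conditions_general (f g : ℝ → ℂ)
    (hg : ContinuousOn g (Set.Icc 0 1))
    (X : ℝ → ℂ → Matrix (Fin 2) (Fin 2) ℂ)
    (hode : ∀ t : ℂ, ∀ s ∈ Set.Icc (0:ℝ) 1,
      HasDerivWithinAt (fun s' => X s' t) (X s t * !![0, t * f s; g s, 0])
        (Set.Icc (0:ℝ) 1) s)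
    (hinit : ∀ t : ℂ, X 0 t = 1)
    (M : ℂ → Matrix (Fin 2) (Fin 2) ℂ) (hM : M = fun t => X 1 t)
    (hgint : (∫ s in (0:ℝ)..1, g s) = 0)
    (hdiff : DifferentiableAt ℂ M 0) :
    M 0 = 1 ∧
    HasDerivAt (fun l : ℂ => M (l⁻¹ * (l - 1) ^ 2))
      (0 : Matrix (Fin 2) (Fin 2) ℂ) (1 : ℂ) := by
  have hpotential : ∀ s, !![0, 0 * f s; g s, 0] = g s • Matrix.single 1 0 (1 : ℂ) := fun s => by
    ext i j
    fin_cases i <;> fin_cases j <;> simp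
  have hM0 : M 0 = 1 := by
    have hX := eq_one_add_integral_smul_of_hasDerivWithinAt
      (N := Matrix.single (1 : Fin 2) 0 (1 : ℂ)) (by simp) hg
      (fun s hs => by simpa only [hpotential, mul_smul_comm] using hode 0 s hs) (hinit 0)
    simpa [hM, hgint] using hX 1 (right_mem_Icc.2 zero_le_one)
  refine ⟨hM0, ?_⟩
  exact (hdiff.hasDerivAt.scomp_of_eq (x := 1) hasDerivAt_inv_mul_sub_one_sq
    (by norm_num)).congr_deriv (zero_smul ℂ _)

/-- Lemma 2.4: for the monodromy `M(t) = X(1,t)` of `∂ₛX = X·[[0, t·f],[g, 0]]`,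
`X(0,t) = Id`, with `∫₀¹ g = 0`, the closing conditions hold at the Sym point:
`M̃(1) = Id` and `d_λ M̃(1) = 0`, where `M̃(λ) = M(λ⁻¹(λ−1)²)`. -/
theorem closing_conditions (f g : ℝ → ℂ)
    (hf : ContinuousOn f (Set.Icc 0 1)) (hg : ContinuousOn g (Set.Icc 0 1))
    (X : ℝ → ℂ → Matrix (Fin 2) (Fin 2) ℂ)
    (hode : ∀ t : ℂ, ∀ s ∈ Set.Icc (0:ℝ) 1,
      HasDerivWithinAt (fun s' => X s' t) (X s t * !![0, t * f s; g s, 0])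
        (Set.Icc (0:ℝ) 1) s)
    (hinit : ∀ t : ℂ, X 0 t = 1)
    (M : ℂ → Matrix (Fin 2) (Fin 2) ℂ) (hM : M = fun t => X 1 t)
    (hgint : (∫ s in (0:ℝ)..1, g s) = 0)
    (hdiff : DifferentiableAt ℂ M 0) :
    M 0 = 1 ∧
    HasDerivAt (fun l : ℂ => M (l⁻¹ * (l - 1) ^ 2))
      (0 : Matrix (Fin 2) (Fin 2) ℂ) (1 : ℂ) :=
  closing_conditions_general f g hg X hode hinit M hM hgint hdiff
end

section
/- Consider the matrix ODE along a curve: for continuous functions f, g : [0,1] → ℂ and a parameter u ∈ ℂ, let X(s,u) ∈ Matrix (Fin 2) (Fin 2) ℂ solve ∂ₛX(s,u) = X(s,u)·[[0, u·f(s)],[g(s), 0]] with X(0,u) = Id, and set τ(u) = (1/2)·trace X(1,u). Define the iterated integrals I₀ = ∫₀¹ f(s) ds, I₁ = ∫₀¹ f(s)·(∫₀ˢ g(v) dv) ds, I₂ = ∫₀¹ g(s)·(∫₀ˢ f(u)·(∫₀ᵘ g(v) dv) du) ds. Assume: (i) X is twice continuously differentiable jointly in (s,u) and det X(s,u) = 1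 for all s, u; (ii) ∫₀¹ g(s) ds = 0; (iii) τ(u) is real for every real u; (iv) I₀·I₂ + I₁² is a (negative) real number, i.e. Im(I₀·I₂ + I₁²) = 0 and Re(I₀·I₂ + I₁²) < 0. Then there exists c₀ > 0 such that for every real c with 0 < |c| < c₀ and every λ ∈ ℂ with |λ| = 1 and λ ≠ 1, one has |τ(c·λ⁻¹(λ−1)²)| < 1. -/
attribute [local instance] Matrix.normedAddCommGroup Matrix.normedSpace

/-!
Put `G(s) = ∫₀ˢ g`. The gauge `Y = X · [[1, 0], [-G, 1]]` solves `Y' = Y · u N` with the traceless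
`N = [[-fG, f], [-fG², fG]]`, and `Y(1) = X(1)` because `G(1) = 0`. The coefficient of this linear
ODE is `O(u)`, so (Grönwall plus two Picard steps) `Y(1) = 1 + u ∫ N + u² ∫∫_{v<r} N(v) N(r) + O(u³)`
uniformly for `|u| ≤ 1`. Integrating by parts, again with `G(1) = 0`, the trace of the second-order
term is `I₀ I₂ + I₁²`. Hence `τ(u) = 1 + u² (I₀ I₂ + I₁²)/2 + O(u³)`, which for small real `u ≠ 0`
has modulus `< 1`; finally `λ⁻¹ (λ - 1)² = 2 Re λ - 2` is real, nonzero and in `[-4, 0)` on the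
punctured unit circle.
-/

open MeasureTheory Set intervalIntegral Real

section Integrals

variable {E : Type*} [NormedAddCommGroup E] {w : ℝ → E} {a b r : ℝ}

theorem ContinuousOn.intervalIntegrable_of_mem_Icc (hw : ContinuousOn w (Icc a b))
    (hr : r ∈ Icc a b) : IntervalIntegrable w volume a r :=
  (hw.mono (Icc_subset_Icc le_rfl hr.2)).intervalIntegrable_of_Icc hr.1

theorem norm_integral_le_of_forall_mem_Icc_zero_one [NormedSpace ℝ E] {C : ℝ}
    (hw : ∀ s ∈ Icc (0:ℝ) 1, ‖w s‖ ≤ C) (hr : r ∈ Icc (0:ℝ) 1) :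
    ‖∫ v in (0:ℝ)..r, w v‖ ≤ C := by
  have hC : 0 ≤ C := (norm_nonneg _).trans (hw r hr)
  calc ‖∫ v in (0:ℝ)..r, w v‖ ≤ C * |r - 0| := by
        refine norm_integral_le_of_norm_le_const fun s hs => hw s ?_
        rw [uIoc_of_le hr.1] at hs
        exact ⟨hs.1.le, hs.2.trans hr.2⟩
    _ ≤ C := by
        rw [sub_zero, abs_of_nonneg hr.1]
        exact mul_le_of_le_one_right hC hr.2

theorem hasDerivWithinAt_integral_of_continuousOn [NormedSpace ℝ E] [CompleteSpace E]
    (hw : ContinuousOn w (Icc a b)) (hr : r ∈ Icc a b) :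
    HasDerivWithinAt (fun t => ∫ v in a..t, w v) (w r) (Icc a b) r := by
  have : Fact (r ∈ Icc a b) := ⟨hr⟩
  exact integral_hasDerivWithinAt_right (hw.intervalIntegrable_of_mem_Icc hr)
    (hw.stronglyMeasurableAtFilter_nhdsWithin measurableSet_Icc r) (hw r hr)

theorem continuousOn_primitive_of_continuousOn [NormedSpace ℝ E] [CompleteSpace E]
    (hw : ContinuousOn w (Icc a b)) : ContinuousOn (fun t => ∫ v in a..t, w v) (Icc a b) :=
  fun _ hr => (hasDerivWithinAt_integral_of_continuousOn hw hr).continuousWithinAt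

theorem integral_eq_sub_of_hasDerivWithinAt_Icc [NormedSpace ℝ E] [CompleteSpace E]
    {F : ℝ → E} (hF : ∀ s ∈ Icc a b, HasDerivWithinAt F (w s) (Icc a b) s)
    (hw : ContinuousOn w (Icc a b)) (hr : r ∈ Icc a b) :
    ∫ v in a..r, w v = F r - F a :=
  integral_eq_sub_of_hasDerivAt_of_le hr.1
    (fun s hs => (hF s (Icc_subset_Icc le_rfl hr.2 hs)).continuousWithinAt.mono
      (Icc_subset_Icc le_rfl hr.2))
    (fun s hs => (hF s ⟨hs.1.le, hs.2.le.trans hr.2⟩).hasDerivAt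
      (Icc_mem_nhds hs.1 (hs.2.trans_le hr.2)))
    (hw.intervalIntegrable_of_mem_Icc hr)

end Integrals

section LinearODE

variable {E : Type*} [NormedAddCommGroup E] [NormedSpace ℝ E]
  {L : ℝ → E →L[ℝ] E} {y : ℝ → E} {K : ℝ}

theorem norm_le_mul_exp_of_hasDerivWithinAt_clm_apply
    (hK : 0 ≤ K) (hLK : ∀ s ∈ Icc (0:ℝ) 1, ∀ x, ‖L s x‖ ≤ K * ‖x‖)
    (hy : ∀ s ∈ Icc (0:ℝ) 1, HasDerivWithinAt y (L s (y s)) (Icc 0 1) s) :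
    ∀ s ∈ Icc (0:ℝ) 1, ‖y s‖ ≤ ‖y 0‖ * exp K := by
  intro s hs
  calc ‖y s‖ ≤ gronwallBound ‖y 0‖ K 0 (s - 0) :=
        norm_le_gronwallBound_of_norm_deriv_right_le
          (fun t ht => (hy t ht).continuousWithinAt)
          (fun t ht => (hy t (Ico_subset_Icc_self ht)).mono_of_mem_nhdsWithin
            (Icc_mem_nhdsGE_of_mem ht))
          le_rfl
          (fun t ht => by simpa using hLK t (Ico_subset_Icc_self ht) (y t))
          s hs
    _ ≤ ‖y 0‖ * exp K := by
        rw [gronwallBound_ε0, sub_zero]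
        gcongr
        exact mul_le_of_le_one_right hK hs.2

theorem eq_add_integral_of_hasDerivWithinAt_clm_apply [CompleteSpace E]
    (hL : ContinuousOn L (Icc 0 1))
    (hy : ∀ s ∈ Icc (0:ℝ) 1, HasDerivWithinAt y (L s (y s)) (Icc 0 1) s)
    {r : ℝ} (hr : r ∈ Icc (0:ℝ) 1) :
    y r = y 0 + ∫ v in (0:ℝ)..r, L v (y v) := by
  have hyc : ContinuousOn y (Icc 0 1) := fun s hs => (hy s hs).continuousWithinAt
  rw [integral_eq_sub_of_hasDerivWithinAt_Icc hy (hL.clm_apply hyc) hr]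
  abel

theorem norm_integral_clm_apply_le (hK : 0 ≤ K)
    (hLK : ∀ s ∈ Icc (0:ℝ) 1, ∀ x, ‖L s x‖ ≤ K * ‖x‖) {z : ℝ → E} {C : ℝ}
    (hz : ∀ s ∈ Icc (0:ℝ) 1, ‖z s‖ ≤ C) {r : ℝ} (hr : r ∈ Icc (0:ℝ) 1) :
    ‖∫ v in (0:ℝ)..r, L v (z v)‖ ≤ K * C :=
  norm_integral_le_of_forall_mem_Icc_zero_one
    (fun s hs => (hLK s hs (z s)).trans (mul_le_mul_of_nonneg_left (hz s hs) hK)) hr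

theorem integral_clm_apply_sub_integral_clm_apply (hL : ContinuousOn L (Icc 0 1))
    {z₁ z₂ : ℝ → E} (hz₁ : ContinuousOn z₁ (Icc 0 1)) (hz₂ : ContinuousOn z₂ (Icc 0 1))
    {r : ℝ} (hr : r ∈ Icc (0:ℝ) 1) :
    (∫ v in (0:ℝ)..r, L v (z₁ v)) - ∫ v in (0:ℝ)..r, L v (z₂ v)
      = ∫ v in (0:ℝ)..r, L v (z₁ v - z₂ v) := by
  rw [← integral_sub ((hL.clm_apply hz₁).intervalIntegrable_of_mem_Icc hr)
    ((hL.clm_apply hz₂).intervalIntegrable_of_mem_Icc hr)]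
  simp only [map_sub]

theorem norm_sub_dysonSeries_two_le [CompleteSpace E] (hL : ContinuousOn L (Icc 0 1))
    (hK : 0 ≤ K) (hLK : ∀ s ∈ Icc (0:ℝ) 1, ∀ x, ‖L s x‖ ≤ K * ‖x‖)
    (hy : ∀ s ∈ Icc (0:ℝ) 1, HasDerivWithinAt y (L s (y s)) (Icc 0 1) s) :
    ‖y 1 - (y 0 + (∫ r in (0:ℝ)..1, L r (y 0))
        + ∫ r in (0:ℝ)..1, L r (∫ v in (0:ℝ)..r, L v (y 0)))‖
      ≤ K ^ 3 * (‖y 0‖ * exp K) := by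
  set B := ‖y 0‖ * exp K
  set p : ℝ → E := fun r => ∫ v in (0:ℝ)..r, L v (y 0)
  have h1 : (1:ℝ) ∈ Icc (0:ℝ) 1 := ⟨zero_le_one, le_rfl⟩
  have hyc : ContinuousOn y (Icc 0 1) := fun s hs => (hy s hs).continuousWithinAt
  have hpc : ContinuousOn p (Icc 0 1) :=
    continuousOn_primitive_of_continuousOn (hL.clm_apply continuousOn_const)
  have hbound := norm_le_mul_exp_of_hasDerivWithinAt_clm_apply hK hLK hy
  have hvolterra := fun r (hr : r ∈ Icc (0:ℝ) 1) =>
    eq_add_integral_of_hasDerivWithinAt_clm_apply hL hy hr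
  have hfirst : ∀ r ∈ Icc (0:ℝ) 1, ‖y r - y 0‖ ≤ K * B := fun r hr => by
    rw [hvolterra r hr, add_sub_cancel_left]
    exact norm_integral_clm_apply_le hK hLK hbound hr
  have hsecond : ∀ r ∈ Icc (0:ℝ) 1, ‖y r - y 0 - p r‖ ≤ K * (K * B) := fun r hr => by
    rw [hvolterra r hr, add_sub_cancel_left,
      integral_clm_apply_sub_integral_clm_apply hL hyc continuousOn_const hr]
    exact norm_integral_clm_apply_le hK hLK hfirst hr
  have hremainder : y 1 - (y 0 + p 1 + ∫ r in (0:ℝ)..1, L r (p r))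
      = ∫ r in (0:ℝ)..1, L r (y r - y 0 - p r) := by
    rw [← integral_clm_apply_sub_integral_clm_apply (z₁ := fun r => y r - y 0) hL
      (hyc.sub continuousOn_const) hpc h1,
      ← integral_clm_apply_sub_integral_clm_apply hL hyc continuousOn_const h1,
      hvolterra 1 h1]
    abel
  calc _ = ‖∫ r in (0:ℝ)..1, L r (y r - y 0 - p r)‖ := congrArg norm hremainder
    _ ≤ K * (K * (K * B)) := norm_integral_clm_apply_le hK hLK hsecond h1
    _ = K ^ 3 * B := by ring

end LinearODE

namespace Matrix

variable {l m n : Type*} [Fintype l] [Fintype m] [Fintype n] {α : Type*}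

theorem norm_mul_le_card [NormedRing α] (A : Matrix l m α) (B : Matrix m n α) :
    ‖A * B‖ ≤ Fintype.card m * (‖A‖ * ‖B‖) := by
  refine (norm_le_iff (by positivity)).2 fun i j => ?_
  calc ‖(A * B) i j‖ ≤ ∑ k, ‖A i k‖ * ‖B k j‖ :=
        (norm_sum_le _ _).trans (Finset.sum_le_sum fun k _ => norm_mul_le _ _)
    _ ≤ ∑ _k : m, ‖A‖ * ‖B‖ := Finset.sum_le_sum fun k _ =>
        mul_le_mul (norm_entry_le_entrywise_sup_norm A) (norm_entry_le_entrywise_sup_norm B)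
          (norm_nonneg _) (norm_nonneg _)
    _ = Fintype.card m * (‖A‖ * ‖B‖) := by simp

theorem norm_trace_le_card [NormedAddCommGroup α] (A : Matrix n n α) :
    ‖A.trace‖ ≤ Fintype.card n * ‖A‖ :=
  calc ‖A.trace‖ ≤ ∑ i, ‖A i i‖ := norm_sum_le _ _
    _ ≤ ∑ _i : n, ‖A‖ := Finset.sum_le_sum fun i _ => norm_entry_le_entrywise_sup_norm A
    _ = Fintype.card n * ‖A‖ := by simp

variable [NormedRing α] [NormedAlgebra ℝ α]

noncomputable def mulRightCLM : Matrix n n α →L[ℝ] Matrix n n α →L[ℝ] Matrix n n α :=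
  (LinearMap.mul ℝ (Matrix n n α)).flip.mkContinuous₂ (Fintype.card n) fun B A => by
    simpa [mul_comm ‖B‖, mul_assoc] using norm_mul_le_card A B

theorem intervalIntegral_apply {F : ℝ → Matrix m n ℂ} {a b : ℝ}
    (hF : ContinuousOn F (uIcc a b)) (i : m) (j : n) :
    (∫ v in a..b, F v) i j = ∫ v in a..b, F v i j := by
  let e : Matrix m n ℂ →L[ℝ] ℂ :=
    (ContinuousLinearMap.proj (R := ℝ) (φ := fun _ : n => ℂ) j).comp
      (ContinuousLinearMap.proj (R := ℝ) (φ := fun _ : m => n → ℂ) i)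
  exact (e.intervalIntegral_comp_comm (hF.intervalIntegrable (μ := volume))).symm

theorem trace_intervalIntegral {F : ℝ → Matrix n n ℂ} {a b : ℝ}
    (hF : ContinuousOn F (uIcc a b)) :
    (∫ v in a..b, F v).trace = ∫ v in a..b, (F v).trace := by
  simp only [trace, diag, intervalIntegral_apply hF]
  refine (intervalIntegral.integral_finsetSum fun i _ => ?_).symm
  exact ((continuous_apply i).comp (continuous_apply i)).comp_continuousOn hF |>.intervalIntegrable

theorem norm_sub_dysonSeries_two_le {Y M : ℝ → Matrix n n ℂ} {K : ℝ} (hK : 0 ≤ K)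
    (hM : ContinuousOn M (Icc 0 1)) (hMK : ∀ s ∈ Icc (0:ℝ) 1, ‖M s‖ ≤ K)
    (hY : ∀ s ∈ Icc (0:ℝ) 1, HasDerivWithinAt Y (Y s * M s) (Icc 0 1) s) :
    ‖Y 1 - (Y 0 + (∫ r in (0:ℝ)..1, Y 0 * M r)
        + ∫ r in (0:ℝ)..1, (∫ v in (0:ℝ)..r, Y 0 * M v) * M r)‖
      ≤ (Fintype.card n * K) ^ 3 * (‖Y 0‖ * exp (Fintype.card n * K)) := by
  refine _root_.norm_sub_dysonSeries_two_le (E := Matrix n n ℂ) (L := fun s => mulRightCLM (M s))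
    ((mulRightCLM (n := n) (α := ℂ)).continuous.comp_continuousOn hM) (by positivity)
    (fun s hs A => ?_) hY
  calc ‖A * M s‖ ≤ Fintype.card n * (‖A‖ * ‖M s‖) := norm_mul_le_card A (M s)
    _ ≤ Fintype.card n * K * ‖A‖ := by
      rw [mul_comm ‖A‖, ← mul_assoc]
      gcongr
      exact hMK s hs

end Matrix

theorem integral_second_order_coeff_eq {f g G : ℝ → ℂ} (hf : ContinuousOn f (Icc 0 1))
    (hg : ContinuousOn g (Icc 0 1))
    (hG : ∀ s ∈ Icc (0:ℝ) 1, HasDerivWithinAt G (g s) (Icc 0 1) s) (hG₀ : G 0 = 0)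
    (hG₁ : G 1 = 0) :
    ∫ r in (0:ℝ)..1, (2 * (f r * G r) * (∫ v in (0:ℝ)..r, f v * G v)
        - f r * G r ^ 2 * (∫ v in (0:ℝ)..r, f v) - f r * ∫ v in (0:ℝ)..r, f v * G v ^ 2)
      = (∫ s in (0:ℝ)..1, f s) * (∫ s in (0:ℝ)..1, g s * ∫ u in (0:ℝ)..s, f u * G u)
        + (∫ s in (0:ℝ)..1, f s * G s) ^ 2 := by
  have hGc : ContinuousOn G (Icc 0 1) := fun s hs => (hG s hs).continuousWithinAt
  have hfG : ContinuousOn (fun r => f r * G r) (Icc 0 1) := hf.mul hGc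
  have hfG2 : ContinuousOn (fun r => f r * G r ^ 2) (Icc 0 1) := hf.mul (hGc.pow 2)
  have hprim := fun {w : ℝ → ℂ} (hw : ContinuousOn w (Icc 0 1)) s (hs : s ∈ Icc (0:ℝ) 1) =>
    hasDerivWithinAt_integral_of_continuousOn hw hs
  have hii := fun {w : ℝ → ℂ} (hw : ContinuousOn w (Icc 0 1)) =>
    hw.intervalIntegrable_of_Icc (μ := volume) zero_le_one
  have hI : uIcc (0:ℝ) 1 = Icc 0 1 := uIcc_of_le zero_le_one
  have hsq := integral_deriv_mul_eq_sub_of_hasDerivWithinAt (hI ▸ hprim hfG) (hI ▸ hprim hfG)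
    (hii hfG) (hii hfG)
  have hAP := integral_deriv_mul_eq_sub_of_hasDerivWithinAt (hI ▸ hprim hf) (hI ▸ hprim hfG2)
    (hii hf) (hii hfG2)
  have hGb := integral_deriv_mul_eq_sub_of_hasDerivWithinAt (hI ▸ hG) (hI ▸ hprim hfG)
    (hii hg) (hii hfG)
  have hpc : ∀ {w : ℝ → ℂ}, ContinuousOn w (Icc 0 1) →
      ContinuousOn (fun t => ∫ v in (0:ℝ)..t, w v) (Icc 0 1) :=
    fun hw => continuousOn_primitive_of_continuousOn hw
  -- `A, b, P` being the primitives of `f, fG, fG²`: `(b²)' = 2 fG b`, `(A P)' = fG² A + f P`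
  -- and `(G b)' = g b + fG²`, whose boundary terms vanish except `b(1)²` and `A(1) P(1)`
  simp only [integral_same, hG₀, hG₁, mul_zero, zero_mul, sub_zero] at hsq hAP hGb
  have hGb' : (∫ s in (0:ℝ)..1, g s * ∫ u in (0:ℝ)..s, f u * G u)
      + ∫ s in (0:ℝ)..1, G s * (f s * G s) = 0 :=
    (integral_add (hii (hg.mul (hpc hfG))) (hii (hGc.mul hfG))).symm.trans hGb
  have hGfG : ∫ s in (0:ℝ)..1, G s * (f s * G s) = ∫ s in (0:ℝ)..1, f s * G s ^ 2 :=
    integral_congr fun r _ => by ring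
  have hsplit : ∫ r in (0:ℝ)..1, (2 * (f r * G r) * (∫ v in (0:ℝ)..r, f v * G v)
        - f r * G r ^ 2 * (∫ v in (0:ℝ)..r, f v) - f r * ∫ v in (0:ℝ)..r, f v * G v ^ 2)
      = (∫ r in (0:ℝ)..1, (f r * G r * (∫ v in (0:ℝ)..r, f v * G v)
          + (∫ v in (0:ℝ)..r, f v * G v) * (f r * G r)))
        - ∫ r in (0:ℝ)..1, (f r * (∫ v in (0:ℝ)..r, f v * G v ^ 2)
          + (∫ v in (0:ℝ)..r, f v) * (f r * G r ^ 2)) := by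
    refine (integral_congr fun r _ => ?_).trans (integral_sub ?_ ?_)
    · ring
    · exact hii ((hfG.mul (hpc hfG)).add ((hpc hfG).mul hfG))
    · exact hii ((hf.mul (hpc hfG2)).add ((hpc hf).mul hfG2))
  rw [hsplit, hsq, hAP]
  linear_combination (-∫ s in (0:ℝ)..1, f s) * hGb' + (∫ s in (0:ℝ)..1, f s) * hGfG

section Gauge

def gaugeMatrix (G : ℂ) : Matrix (Fin 2) (Fin 2) ℂ := !![1, 0; -G, 1]

def gaugedPotential (a G : ℂ) : Matrix (Fin 2) (Fin 2) ℂ := !![-(a * G), a; -(a * G ^ 2), a * G]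

@[simp] theorem gaugeMatrix_zero : gaugeMatrix 0 = 1 := by
  ext i j; fin_cases i <;> fin_cases j <;> simp [gaugeMatrix]

@[simp] theorem trace_gaugedPotential (a G : ℂ) : (gaugedPotential a G).trace = 0 := by
  simp [gaugedPotential, Matrix.trace_fin_two]

theorem potential_mul_gaugeMatrix_add (u a c G : ℂ) :
    !![0, u * a; c, 0] * gaugeMatrix G + !![0, 0; -c, 0]
      = gaugeMatrix G * (u • gaugedPotential a G) := by
  ext i j; fin_cases i <;> fin_cases j <;> simp [gaugeMatrix, gaugedPotential] <;> ring

theorem ContinuousOn.gaugedPotential {a G : ℝ → ℂ} {s : Set ℝ} (ha : ContinuousOn a s)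
    (hG : ContinuousOn G s) : ContinuousOn (fun t => gaugedPotential (a t) (G t)) s := by
  refine continuousOn_pi.2 fun i => continuousOn_pi.2 fun j => ?_
  fin_cases i <;> fin_cases j <;> simp [_root_.gaugedPotential] <;> fun_prop

variable {G : ℝ → ℂ} {c : ℂ} {s : Set ℝ} {x : ℝ}

theorem hasDerivWithinAt_gaugeMatrix (hG : HasDerivWithinAt G c s x) :
    HasDerivWithinAt (fun t => gaugeMatrix (G t)) !![0, 0; -c, 0] s x := by
  have h := (hG.smul_const (!![0, 0; 1, 0] : Matrix (Fin 2) (Fin 2) ℂ)).const_sub 1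
  have e : (fun t => gaugeMatrix (G t)) = fun t => 1 - G t • !![0, 0; 1, 0] := by
    funext t; ext i j; fin_cases i <;> fin_cases j <;> simp [gaugeMatrix]
  rw [e]
  exact h.congr_deriv (by ext i j; fin_cases i <;> fin_cases j <;> simp)

theorem HasDerivWithinAt.mul_gaugeMatrix {X : ℝ → Matrix (Fin 2) (Fin 2) ℂ} {u a : ℂ}
    (hX : HasDerivWithinAt X (X x * !![0, u * a; c, 0]) s x) (hG : HasDerivWithinAt G c s x) :
    HasDerivWithinAt (fun t => X t * gaugeMatrix (G t))
      (X x * gaugeMatrix (G x) * (u • gaugedPotential a (G x))) s x := by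
  have h := (Matrix.mulRightCLM (n := Fin 2) (α := ℂ)).hasDerivWithinAt_of_bilinear
    (hasDerivWithinAt_gaugeMatrix hG) hX
  refine h.congr_deriv ?_
  rw [mul_assoc, ← potential_mul_gaugeMatrix_add u a c (G x), mul_add, ← mul_assoc]
  rfl

end Gauge

theorem norm_trace_monodromy_sub_le {f g G : ℝ → ℂ} {X : ℝ → Matrix (Fin 2) (Fin 2) ℂ} {u : ℂ}
    {K : ℝ} (hf : ContinuousOn f (Icc 0 1))
    (hG : ∀ s ∈ Icc (0:ℝ) 1, HasDerivWithinAt G (g s) (Icc 0 1) s) (hG₀ : G 0 = 0)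
    (hG₁ : G 1 = 0) (hX : ∀ s ∈ Icc (0:ℝ) 1,
      HasDerivWithinAt X (X s * !![0, u * f s; g s, 0]) (Icc 0 1) s)
    (hX₀ : X 0 = 1) (hK : 0 ≤ K)
    (hNK : ∀ s ∈ Icc (0:ℝ) 1, ‖gaugedPotential (f s) (G s)‖ ≤ K) :
    ‖(X 1).trace - (2 + u ^ 2 * (∫ r in (0:ℝ)..1, (∫ v in (0:ℝ)..r,
        gaugedPotential (f v) (G v)) * gaugedPotential (f r) (G r)).trace)‖
      ≤ 2 * ((2 * (‖u‖ * K)) ^ 3 * (‖(1 : Matrix (Fin 2) (Fin 2) ℂ)‖ * exp (2 * (‖u‖ * K)))) := by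
  set N : ℝ → Matrix (Fin 2) (Fin 2) ℂ := fun s => gaugedPotential (f s) (G s)
  have hGc : ContinuousOn G (Icc 0 1) := fun s hs => (hG s hs).continuousWithinAt
  have hN : ContinuousOn N (Icc 0 1) := hf.gaugedPotential hGc
  have hM : ContinuousOn (fun s => u • N s) (Icc 0 1) := hN.const_smul u
  have hMK : ∀ s ∈ Icc (0:ℝ) 1, ‖u • N s‖ ≤ ‖u‖ * K := fun s hs => by
    rw [norm_smul]; gcongr; exact hNK s hs
  have hY : ∀ s ∈ Icc (0:ℝ) 1, HasDerivWithinAt (fun t => X t * gaugeMatrix (G t))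
      ((X s * gaugeMatrix (G s)) * (u • N s)) (Icc 0 1) s :=
    fun s hs => (hX s hs).mul_gaugeMatrix (hG s hs)
  have h := Matrix.norm_sub_dysonSeries_two_le (mul_nonneg (norm_nonneg u) hK) hM hMK hY
  simp only [hX₀, hG₀, hG₁, gaugeMatrix_zero, mul_one, one_mul, Fintype.card_fin,
    Nat.cast_ofNat] at h
  set R := X 1 - (1 + (∫ r in (0:ℝ)..1, u • N r)
    + ∫ r in (0:ℝ)..1, (∫ v in (0:ℝ)..r, u • N v) * (u • N r))
  have hsmul : ∀ r, (u • ∫ v in (0:ℝ)..r, N v) * (u • N r)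
      = u ^ 2 • ((∫ v in (0:ℝ)..r, N v) * N r) := fun r => by
    rw [smul_mul_smul_comm, sq]
  have htraceN : (∫ r in (0:ℝ)..1, N r).trace = 0 := by
    rw [Matrix.trace_intervalIntegral (by rwa [uIcc_of_le zero_le_one])]
    simp [N]
  have htrace : R.trace
      = (X 1).trace - (2 + u ^ 2 * (∫ r in (0:ℝ)..1, (∫ v in (0:ℝ)..r, N v) * N r).trace) := by
    simp only [R, intervalIntegral.integral_smul, hsmul, Matrix.trace_sub, Matrix.trace_add,
      Matrix.trace_smul, Matrix.trace_one, htraceN, Fintype.card_fin, smul_eq_mul]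
    push_cast
    ring
  rw [← htrace]
  calc ‖R.trace‖ ≤ 2 * ‖R‖ := (Matrix.norm_trace_le_card R).trans_eq (by simp)
    _ ≤ _ := by gcongr

theorem trace_integral_integral_gaugedPotential_mul {f G : ℝ → ℂ} (hf : ContinuousOn f (Icc 0 1))
    (hG : ContinuousOn G (Icc 0 1)) :
    (∫ r in (0:ℝ)..1, (∫ v in (0:ℝ)..r, gaugedPotential (f v) (G v))
        * gaugedPotential (f r) (G r)).trace
      = ∫ r in (0:ℝ)..1, (2 * (f r * G r) * (∫ v in (0:ℝ)..r, f v * G v)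
        - f r * G r ^ 2 * (∫ v in (0:ℝ)..r, f v) - f r * ∫ v in (0:ℝ)..r, f v * G v ^ 2) := by
  have hN := hf.gaugedPotential hG
  -- stated with `Matrix`'s own topology, for which `ContinuousMul` is available
  have hprim : ContinuousOn (fun r => ∫ v in (0:ℝ)..r, gaugedPotential (f v) (G v)) (Icc 0 1) :=
    continuousOn_primitive_of_continuousOn hN
  rw [Matrix.trace_intervalIntegral (by rw [uIcc_of_le zero_le_one]; exact hprim.mul hN)]
  refine integral_congr fun r hr => ?_
  rw [uIcc_of_le zero_le_one] at hr
  have hNr : ContinuousOn (fun t => gaugedPotential (f t) (G t)) (uIcc 0 r) := by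
    rw [uIcc_of_le hr.1]; exact hN.mono (Icc_subset_Icc le_rfl hr.2)
  simp only [Matrix.trace_fin_two, Matrix.mul_apply, Fin.sum_univ_two,
    Matrix.intervalIntegral_apply hNr]
  simp only [gaugedPotential, Matrix.of_apply, Matrix.cons_val', Matrix.cons_val_zero,
    Matrix.cons_val_one, Matrix.cons_val_fin_one, intervalIntegral.integral_neg]
  ring

theorem exists_norm_half_trace_monodromy_sub_le {f g : ℝ → ℂ} (hf : ContinuousOn f (Icc 0 1))
    (hg : ContinuousOn g (Icc 0 1)) {X : ℝ × ℂ → Matrix (Fin 2) (Fin 2) ℂ}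
    (hode : ∀ u : ℂ, ∀ s ∈ Icc (0:ℝ) 1,
      HasDerivWithinAt (fun s' => X (s', u)) (X (s, u) * !![0, u * f s; g s, 0]) (Icc 0 1) s)
    (hinit : ∀ u : ℂ, X (0, u) = 1) (hgint : ∫ s in (0:ℝ)..1, g s = 0) :
    ∃ C : ℝ, ∀ u : ℂ, ‖u‖ ≤ 1 →
      ‖(1 / 2 : ℂ) * (X (1, u)).trace - (1 + u ^ 2 * ((∫ s in (0:ℝ)..1, f s)
          * (∫ s in (0:ℝ)..1, g s * ∫ u in (0:ℝ)..s, f u * ∫ v in (0:ℝ)..u, g v)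
          + (∫ s in (0:ℝ)..1, f s * ∫ v in (0:ℝ)..s, g v) ^ 2) / 2)‖ ≤ C * ‖u‖ ^ 3 := by
  set G : ℝ → ℂ := fun t => ∫ v in (0:ℝ)..t, g v
  have hG : ∀ s ∈ Icc (0:ℝ) 1, HasDerivWithinAt G (g s) (Icc 0 1) s :=
    fun s hs => hasDerivWithinAt_integral_of_continuousOn hg hs
  have hGc : ContinuousOn G (Icc 0 1) := fun s hs => (hG s hs).continuousWithinAt
  have hG₀ : G 0 = 0 := integral_same
  obtain ⟨K, hK⟩ := isCompact_Icc.exists_bound_of_continuousOn (hf.gaugedPotential hGc)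
  have hK₀ : 0 ≤ K := (norm_nonneg _).trans (hK 0 ⟨le_rfl, zero_le_one⟩)
  refine ⟨8 * K ^ 3 * (‖(1 : Matrix (Fin 2) (Fin 2) ℂ)‖ * exp (2 * K)), fun u hu => ?_⟩
  have h := norm_trace_monodromy_sub_le (X := fun s => X (s, u)) hf hG hG₀ hgint (hode u)
    (hinit u) hK₀ hK
  rw [trace_integral_integral_gaugedPotential_mul hf hGc,
    integral_second_order_coeff_eq hf hg hG hG₀ hgint] at h
  set S := (∫ s in (0:ℝ)..1, f s)
    * (∫ s in (0:ℝ)..1, g s * ∫ u in (0:ℝ)..s, f u * ∫ v in (0:ℝ)..u, g v)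
    + (∫ s in (0:ℝ)..1, f s * ∫ v in (0:ℝ)..s, g v) ^ 2
  have hhalf : (1 / 2 : ℂ) * (X (1, u)).trace - (1 + u ^ 2 * S / 2)
      = ((X (1, u)).trace - (2 + u ^ 2 * S)) / 2 := by ring
  rw [hhalf, norm_div, Complex.norm_two]
  calc _ ≤ 2 * ((2 * (‖u‖ * K)) ^ 3 * (‖(1 : Matrix (Fin 2) (Fin 2) ℂ)‖
          * exp (2 * (‖u‖ * K)))) / 2 := by gcongr
    _ ≤ 8 * K ^ 3 * (‖(1 : Matrix (Fin 2) (Fin 2) ℂ)‖ * exp (2 * K)) * ‖u‖ ^ 3 := by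
        have : exp (2 * (‖u‖ * K)) ≤ exp (2 * K) := by
          gcongr; exact mul_le_of_le_one_left hK₀ hu
        calc _ = 8 * K ^ 3 * (‖(1 : Matrix (Fin 2) (Fin 2) ℂ)‖
              * exp (2 * (‖u‖ * K))) * ‖u‖ ^ 3 := by ring
          _ ≤ _ := by gcongr

open Complex in
theorem exists_ofReal_eq_inv_mul_sub_one_sq {l : ℂ} (hl : ‖l‖ = 1) (hl₁ : l ≠ 1) :
    ∃ t : ℝ, l⁻¹ * (l - 1) ^ 2 = t ∧ t ≠ 0 ∧ |t| ≤ 4 := by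
  have hnormSq : normSq l = 1 := by rw [normSq_eq_norm_sq, hl, one_pow]
  have hre : l.re ≠ 1 := fun h => hl₁ <| Complex.ext h (by
    rw [normSq_apply, h] at hnormSq; simpa using (by nlinarith : l.im * l.im = 0))
  have hre_le : |l.re| ≤ 1 := hl ▸ abs_re_le_norm l
  refine ⟨2 * l.re - 2, ?_, ?_, ?_⟩
  · have hconj : l⁻¹ = (starRingEnd ℂ) l := by rw [inv_def, hnormSq, inv_one, ofReal_one, mul_one]
    have hmul : (starRingEnd ℂ) l * l = 1 := by rw [mul_comm, mul_conj, hnormSq, ofReal_one]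
    calc l⁻¹ * (l - 1) ^ 2 = (starRingEnd ℂ) l * l * l - 2 * ((starRingEnd ℂ) l * l)
          + (starRingEnd ℂ) l := by rw [hconj]; ring
      _ = l + (starRingEnd ℂ) l - 2 := by rw [hmul]; ring
      _ = ((2 * l.re - 2 : ℝ) : ℂ) := by rw [add_conj]; push_cast; ring
  · intro h; apply hre; linarith
  · rw [abs_le] at hre_le ⊢; constructor <;> linarith

open Complex in
theorem exists_norm_lt_one_of_norm_sub_le {τ : ℂ → ℂ} {S : ℂ} {C : ℝ} (hS_im : S.im = 0)
    (hS_re : S.re < 0) (hτ : ∀ u : ℂ, ‖u‖ ≤ 1 → ‖τ u - (1 + u ^ 2 * S / 2)‖ ≤ C * ‖u‖ ^ 3) :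
    ∃ ε > 0, ∀ u : ℝ, u ≠ 0 → |u| < ε → ‖τ u‖ < 1 := by
  set s := -S.re
  have hs : 0 < s := neg_pos.2 hS_re
  refine ⟨min 1 (min (1 / s) (s / (2 * (|C| + 1)))), by positivity, fun u hu hε => ?_⟩
  have hu₁ : |u| ≤ 1 := (hε.trans_le (min_le_left _ _)).le
  have hus : |u| * s < 1 := by
    have := hε.trans_le ((min_le_right _ _).trans (min_le_left _ _))
    rwa [lt_div_iff₀ hs] at this
  have huC : |u| * (2 * (|C| + 1)) < s := by
    have := hε.trans_le ((min_le_right _ _).trans (min_le_right _ _))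
    rwa [lt_div_iff₀ (by positivity)] at this
  have hmain : (1 : ℂ) + (u : ℂ) ^ 2 * S / 2 = ((1 - u ^ 2 * s / 2 : ℝ) : ℂ) := by
    rw [← re_add_im S, hS_im]; push_cast; simp only [zero_mul, add_zero, ofReal_neg, s]; ring
  have hu2 : u ^ 2 = |u| ^ 2 := (sq_abs u).symm
  have hupos : 0 < |u| := abs_pos.2 hu
  have hbound := hτ u (by rwa [norm_real, Real.norm_eq_abs])
  rw [hmain, norm_real, Real.norm_eq_abs] at hbound
  have hpos : 0 ≤ 1 - u ^ 2 * s / 2 := by nlinarith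
  calc ‖τ u‖ ≤ ‖((1 - u ^ 2 * s / 2 : ℝ) : ℂ)‖ + ‖τ u - ((1 - u ^ 2 * s / 2 : ℝ) : ℂ)‖ :=
        norm_le_norm_add_norm_sub' _ _
    _ ≤ (1 - u ^ 2 * s / 2) + C * |u| ^ 3 := by
        rw [norm_real, Real.norm_eq_abs, abs_of_nonneg hpos]; gcongr
    _ < 1 := by
        have : C * |u| ^ 3 ≤ |C| * |u| ^ 3 := by gcongr; exact le_abs_self C
        nlinarith [abs_nonneg C, pow_pos hupos 3]

theorem half_trace_bound_general (f g : ℝ → ℂ)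
    (hf : ContinuousOn f (Set.Icc 0 1)) (hg : ContinuousOn g (Set.Icc 0 1))
    (X : ℝ × ℂ → Matrix (Fin 2) (Fin 2) ℂ)
    (hode : ∀ u : ℂ, ∀ s ∈ Set.Icc (0:ℝ) 1,
      HasDerivWithinAt (fun s' => X (s', u)) (X (s, u) * !![0, u * f s; g s, 0])
        (Set.Icc (0:ℝ) 1) s)
    (hinit : ∀ u : ℂ, X (0, u) = 1)
    (τ : ℂ → ℂ) (hτ : τ = fun u => (1 / 2 : ℂ) * (X (1, u)).trace)
    (hgint : (∫ s in (0:ℝ)..1, g s) = 0)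
    (I₀ I₁ I₂ : ℂ)
    (hI₀ : I₀ = ∫ s in (0:ℝ)..1, f s)
    (hI₁ : I₁ = ∫ s in (0:ℝ)..1, f s * ∫ v in (0:ℝ)..s, g v)
    (hI₂ : I₂ = ∫ s in (0:ℝ)..1, g s * ∫ u in (0:ℝ)..s, f u * ∫ v in (0:ℝ)..u, g v)
    (hIm : (I₀ * I₂ + I₁ ^ 2).im = 0) (hRe : (I₀ * I₂ + I₁ ^ 2).re < 0) :
    ∃ c₀ > (0:ℝ), ∀ c : ℝ, 0 < |c| → |c| < c₀ →
      ∀ l : ℂ, ‖l‖ = 1 → l ≠ 1 →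
        ‖τ ((c : ℂ) * (l⁻¹ * (l - 1) ^ 2))‖ < 1 := by
  subst hτ hI₀ hI₁ hI₂
  obtain ⟨C, hC⟩ := exists_norm_half_trace_monodromy_sub_le hf hg hode hinit hgint
  obtain ⟨ε, hε, hlt⟩ := exists_norm_lt_one_of_norm_sub_le hIm hRe (fun u hu => by
    simpa only [mul_div_assoc] using hC u hu)
  refine ⟨ε / 4, by positivity, fun c hc hcε l hl hl₁ => ?_⟩
  obtain ⟨t, ht, ht₀, ht₄⟩ := exists_ofReal_eq_inv_mul_sub_one_sq hl hl₁
  rw [ht, ← Complex.ofReal_mul]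
  refine hlt (c * t) (mul_ne_zero (abs_pos.1 hc) ht₀) ?_
  rw [abs_mul]
  nlinarith [abs_nonneg t]

/-- Lemma 2.5: under the stated hypotheses on the monodromy half-trace
`τ(u) = (1/2)·tr X(1,u)` and the iterated integrals `I₀, I₁, I₂` with
`I₀I₂ + I₁² < 0`, there exists `c₀ > 0` such that for all real `c` with `0 < |c| < c₀`
and all `λ ∈ S¹ \ {1}` one has `|τ(c·λ⁻¹(λ−1)²)| < 1`. -/
theorem half_trace_bound (f g : ℝ → ℂ)
    (hf : ContinuousOn f (Set.Icc 0 1)) (hg : ContinuousOn g (Set.Icc 0 1))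
    (X : ℝ × ℂ → Matrix (Fin 2) (Fin 2) ℂ)
    (hX : ContDiffOn ℝ 2 X (Set.Icc (0:ℝ) 1 ×ˢ Set.univ))
    (hode : ∀ u : ℂ, ∀ s ∈ Set.Icc (0:ℝ) 1,
      HasDerivWithinAt (fun s' => X (s', u)) (X (s, u) * !![0, u * f s; g s, 0])
        (Set.Icc (0:ℝ) 1) s)
    (hinit : ∀ u : ℂ, X (0, u) = 1)
    (hdet : ∀ u : ℂ, ∀ s ∈ Set.Icc (0:ℝ) 1, (X (s, u)).det = 1)
    (τ : ℂ → ℂ) (hτ : τ = fun u => (1 / 2 : ℂ) * (X (1, u)).trace)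
    (hgint : (∫ s in (0:ℝ)..1, g s) = 0)
    (hreal : ∀ u : ℝ, (τ (u : ℂ)).im = 0)
    (I₀ I₁ I₂ : ℂ)
    (hI₀ : I₀ = ∫ s in (0:ℝ)..1, f s)
    (hI₁ : I₁ = ∫ s in (0:ℝ)..1, f s * ∫ v in (0:ℝ)..s, g v)
    (hI₂ : I₂ = ∫ s in (0:ℝ)..1, g s * ∫ u in (0:ℝ)..s, f u * ∫ v in (0:ℝ)..u, g v)
    (hIm : (I₀ * I₂ + I₁ ^ 2).im = 0) (hRe : (I₀ * I₂ + I₁ ^ 2).re < 0) :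
    ∃ c₀ > (0:ℝ), ∀ c : ℝ, 0 < |c| → |c| < c₀ →
      ∀ l : ℂ, ‖l‖ = 1 → l ≠ 1 →
        ‖τ ((c : ℂ) * (l⁻¹ * (l - 1) ^ 2))‖ < 1 :=
  half_trace_bound_general f g hf hg X hode hinit τ hτ hgint I₀ I₁ I₂ hI₀ hI₁ hI₂ hIm hRe
end

section
/- Consider the matrix ODE along a curve: for continuous functions f, g : [0,1] → ℂ and a parameter t ∈ ℂ, let X(s,t) ∈ Matrix (fin 2) (Fin 2) ℂ solve ∂ₛX(s,t) = X(s,t)·[[0, t·f(s)],[g(s), 0]] with X(0,t) = Id. Assume X is twice continuously differentiable jointly in (s,t). Then the derivative of t ↦ X(1,t) at t = 0 equals the matrix [[ ∫₀¹ g(s)·(∫₀ˢ f(u) du) ds , ∫₀¹ f(s) ds ],[ ∫₀¹ g(s)·(∫₀ˢ f(u)·(∫₀ᵘ g(v) dv) du) ds , ∫₀¹ f(s)·(∫₀ˢ g(v) dv) ds ]]. -/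
/-!
Write `(x, y)` for a row of `X`, so that `∂ₛx = y g` and `∂ₛy = t x f`. At `t = 0` the row is
`y = y(0)`, `x = x(0) + y(0) ∫₀ˢ g`. Differentiating the integral equations
`y(s, t) = y(0) + ∫₀ˢ t x f` and `x(s, t) = x(0) + ∫₀ˢ y g` in `t` under the integral sign
(dominated by the sup of `∂ₜX` on a compact strip, as `X` is `C¹`) gives
`∂ₜy(s, 0) = ∫₀ˢ x(·, 0) f` and `∂ₜx(s, 0) = ∫₀ˢ g ∂ₜy(·, 0)`. These real derivatives are
multiplications by complex numbers, hence complex derivatives; the rows `(1, 0)` and `(0, 1)`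
of `X(0, t) = 1` give the four entries.
-/

attribute [local instance] Matrix.normedAddCommGroup Matrix.normedSpace

open MeasureTheory Set Filter

theorem intervalIntegral.integral_eq_sub_of_hasDerivWithinAt_Icc {E : Type*}
    [NormedAddCommGroup E] [NormedSpace ℝ E] [CompleteSpace E] {φ φ' : ℝ → E} {a b : ℝ}
    (hab : a ≤ b)
    (hderiv : ∀ x ∈ Icc a b, HasDerivWithinAt φ (φ' x) (Icc a b) x)
    (hint : IntervalIntegrable φ' volume a b) :
    ∫ x in a..b, φ' x = φ b - φ a :=
  integral_eq_sub_of_hasDerivAt_of_le hab (fun x hx => (hderiv x hx).continuousWithinAt)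
    (fun x hx => (hderiv x (Ioo_subset_Icc_self hx)).hasDerivAt (Icc_mem_nhds hx.1 hx.2)) hint

theorem hasFDerivAt_intervalIntegral_of_continuousOn {H E : Type*} [NormedAddCommGroup H]
    [NormedSpace ℝ H] [ProperSpace H] [NormedAddCommGroup E] [NormedSpace ℝ E]
    {F : ℝ × H → E} {F' : ℝ × H → H →L[ℝ] E} {a b : ℝ} (hab : a ≤ b)
    (hF : ∀ x, ContinuousOn (fun u => F (u, x)) (Icc a b))
    (hF' : ContinuousOn F' (Icc a b ×ˢ univ))
    (hderiv : ∀ u ∈ Icc a b, ∀ x, HasFDerivAt (fun x => F (u, x)) (F' (u, x)) x) (x₀ : H) :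
    HasFDerivAt (fun x => ∫ u in a..b, F (u, x)) (∫ u in a..b, F' (u, x₀)) x₀ := by
  have hI : uIoc a b ⊆ Icc a b := uIoc_of_le hab ▸ Ioc_subset_Icc_self
  obtain ⟨C, hC⟩ := (isCompact_Icc.prod (isCompact_closedBall x₀ 1)).exists_bound_of_continuousOn
    (hF'.mono (prod_mono_right (subset_univ _)))
  have hF'₀ : ContinuousOn (fun u => F' (u, x₀)) (Icc a b) :=
    hF'.comp (Continuous.prodMk_left x₀).continuousOn fun u hu => ⟨hu, mem_univ _⟩
  refine intervalIntegral.hasFDerivAt_integral_of_dominated_of_fderiv_le (bound := fun _ => C)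
    (Metric.ball_mem_nhds x₀ one_pos)
    (Eventually.of_forall fun x => ((hF x).mono hI).aestronglyMeasurable measurableSet_uIoc)
    ((hF x₀).intervalIntegrable_of_Icc hab)
    ((hF'₀.mono hI).aestronglyMeasurable measurableSet_uIoc)
    (ae_of_all _ fun u hu x hx => hC (u, x) ⟨hI hu, Metric.ball_subset_closedBall hx⟩)
    intervalIntegrable_const
    (ae_of_all _ fun u hu x _ => hderiv u (hI hu) x)

section PartialDeriv

variable {E H G : Type*} [NormedAddCommGroup E] [NormedSpace ℝ E] [NormedAddCommGroup H]
  [NormedSpace ℝ H] [NormedAddCommGroup G] [NormedSpace ℝ G]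

noncomputable def partialFDerivSnd (φ : E × H → G) (s : Set E) (p : E × H) : H →L[ℝ] G :=
  (fderivWithin ℝ φ (s ×ˢ univ) p).comp (ContinuousLinearMap.inr ℝ E H)

theorem DifferentiableOn.hasFDerivAt_partialFDerivSnd {φ : E × H → G} {s : Set E}
    (hφ : DifferentiableOn ℝ φ (s ×ˢ univ)) {x : E} (hx : x ∈ s) (y : H) :
    HasFDerivAt (fun y => φ (x, y)) (partialFDerivSnd φ s (x, y)) y := by
  have h := (hφ (x, y) ⟨hx, mem_univ y⟩).hasFDerivWithinAt.comp y
    (hasFDerivAt_prodMk_right x y).hasFDerivWithinAt (s := univ) fun y' _ => ⟨hx, mem_univ y'⟩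
  rwa [hasFDerivWithinAt_univ] at h

theorem ContDiffOn.continuousOn_partialFDerivSnd {φ : E × H → G} {s : Set E}
    (hφ : ContDiffOn ℝ 1 φ (s ×ˢ univ)) (hs : UniqueDiffOn ℝ s) :
    ContinuousOn (partialFDerivSnd φ s) (s ×ˢ univ) :=
  (hφ.continuousOn_fderivWithin (hs.prod uniqueDiffOn_univ) le_rfl).clm_comp continuousOn_const

end PartialDeriv

theorem HasFDerivAt.hasDerivAt_of_smul_one {φ : ℂ → ℂ} {m z : ℂ}
    (h : HasFDerivAt φ (m • (1 : ℂ →L[ℝ] ℂ)) z) : HasDerivAt φ m z :=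
  hasFDerivAt_of_restrictScalars ℝ h (Complex.restrictScalars_toSpanSingleton m)

/-- `(x, y)` is a row `(X i 0, X i 1)` of a solution of `∂ₛX = X !![0, t f; g, 0]` on `[0, 1]`
with initial row `(a, b)`. -/
structure IsRowSolution (f g : ℝ → ℂ) (x y : ℝ × ℂ → ℂ) (a b : ℂ) : Prop where
  contDiffOn_fst : ContDiffOn ℝ 1 x (Icc 0 1 ×ˢ univ)
  contDiffOn_snd : ContDiffOn ℝ 1 y (Icc 0 1 ×ˢ univ)
  hasDerivWithinAt_fst : ∀ t : ℂ, ∀ s ∈ Icc (0:ℝ) 1,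
    HasDerivWithinAt (fun s' => x (s', t)) (y (s, t) * g s) (Icc 0 1) s
  hasDerivWithinAt_snd : ∀ t : ℂ, ∀ s ∈ Icc (0:ℝ) 1,
    HasDerivWithinAt (fun s' => y (s', t)) (x (s, t) * (t * f s)) (Icc 0 1) s
  fst_zero : ∀ t : ℂ, x (0, t) = a
  snd_zero : ∀ t : ℂ, y (0, t) = b

namespace IsRowSolution

variable {f g : ℝ → ℂ} {x y : ℝ × ℂ → ℂ} {a b : ℂ}

theorem continuousOn_fst (h : IsRowSolution f g x y a b) (t : ℂ) :
    ContinuousOn (fun s => x (s, t)) (Icc 0 1) :=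
  fun s hs => (h.hasDerivWithinAt_fst t s hs).continuousWithinAt

theorem continuousOn_snd (h : IsRowSolution f g x y a b) (t : ℂ) :
    ContinuousOn (fun s => y (s, t)) (Icc 0 1) :=
  fun s hs => (h.hasDerivWithinAt_snd t s hs).continuousWithinAt

theorem fst_eq_integral (h : IsRowSolution f g x y a b) (hg : ContinuousOn g (Icc 0 1))
    {s : ℝ} (hs : s ∈ Icc (0:ℝ) 1) (t : ℂ) :
    x (s, t) = a + ∫ u in (0:ℝ)..s, y (u, t) * g u := by
  have hsub : Icc 0 s ⊆ Icc (0:ℝ) 1 := Icc_subset_Icc_right hs.2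
  rw [intervalIntegral.integral_eq_sub_of_hasDerivWithinAt_Icc hs.1
    (fun u hu => (h.hasDerivWithinAt_fst t u (hsub hu)).mono hsub)
    (((h.continuousOn_snd t).mul hg).mono hsub |>.intervalIntegrable_of_Icc hs.1),
    h.fst_zero, add_sub_cancel]

theorem snd_eq_integral (h : IsRowSolution f g x y a b) (hf : ContinuousOn f (Icc 0 1))
    {s : ℝ} (hs : s ∈ Icc (0:ℝ) 1) (t : ℂ) :
    y (s, t) = b + ∫ u in (0:ℝ)..s, x (u, t) * (t * f u) := by
  have hsub : Icc 0 s ⊆ Icc (0:ℝ) 1 := Icc_subset_Icc_right hs.2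
  rw [intervalIntegral.integral_eq_sub_of_hasDerivWithinAt_Icc hs.1
    (fun u hu => (h.hasDerivWithinAt_snd t u (hsub hu)).mono hsub)
    (((h.continuousOn_fst t).mul (continuousOn_const.mul hf)).mono hsub
      |>.intervalIntegrable_of_Icc hs.1),
    h.snd_zero, add_sub_cancel]

theorem snd_param_zero (h : IsRowSolution f g x y a b) (hf : ContinuousOn f (Icc 0 1))
    {s : ℝ} (hs : s ∈ Icc (0:ℝ) 1) : y (s, 0) = b := by
  simpa using h.snd_eq_integral hf hs 0

theorem fst_param_zero (h : IsRowSolution f g x y a b) (hf : ContinuousOn f (Icc 0 1))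
    (hg : ContinuousOn g (Icc 0 1)) {s : ℝ} (hs : s ∈ Icc (0:ℝ) 1) :
    x (s, 0) = a + b * ∫ u in (0:ℝ)..s, g u := by
  rw [h.fst_eq_integral hg hs 0, ← intervalIntegral.integral_const_mul]
  refine congrArg _ (intervalIntegral.integral_congr fun u hu => ?_)
  rw [uIcc_of_le hs.1] at hu
  rw [h.snd_param_zero hf (Icc_subset_Icc_right hs.2 hu)]

theorem hasFDerivAt_snd (h : IsRowSolution f g x y a b) (hf : ContinuousOn f (Icc 0 1))
    (hg : ContinuousOn g (Icc 0 1)) {s : ℝ} (hs : s ∈ Icc (0:ℝ) 1) :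
    HasFDerivAt (fun t => y (s, t))
      ((∫ u in (0:ℝ)..s, f u * (a + b * ∫ v in (0:ℝ)..u, g v)) • (1 : ℂ →L[ℝ] ℂ)) 0 := by
  have hsub : Icc 0 s ⊆ Icc (0:ℝ) 1 := Icc_subset_Icc_right hs.2
  set Dx := partialFDerivSnd x (Icc 0 1)
  have hf₁ : ContinuousOn (fun p : ℝ × ℂ => f p.1) (Icc 0 1 ×ˢ univ) :=
    hf.comp _root_.continuousOn_fst fun p hp => hp.1
  have hDx : ContinuousOn Dx (Icc 0 1 ×ˢ univ) :=
    h.contDiffOn_fst.continuousOn_partialFDerivSnd (uniqueDiffOn_Icc zero_lt_one)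
  have hintegral := hasFDerivAt_intervalIntegral_of_continuousOn (a := 0) (b := s)
    (F := fun p => x p * (p.2 * f p.1))
    (F' := fun p => (x p * f p.1) • (1 : ℂ →L[ℝ] ℂ) + (p.2 * f p.1) • Dx p) hs.1
    (fun t => ((h.continuousOn_fst t).mul (continuousOn_const.mul hf)).mono hsub)
    ((((h.contDiffOn_fst.continuousOn.mul hf₁).smul continuousOn_const).add
      ((_root_.continuousOn_snd.mul hf₁).smul hDx)).mono (prod_mono_left hsub))
    (fun u hu t => by
      have hx := (h.contDiffOn_fst.differentiableOn one_ne_zero).hasFDerivAt_partialFDerivSnd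
        (hsub hu) t
      refine (hx.mul ((hasFDerivAt_id t).mul_const (f u))).congr_fderiv ?_
      ext w
      simp only [add_apply, smul_apply, ContinuousLinearMap.id_apply, one_apply_eq_self,
        id_eq, smul_eq_mul]
      ring) 0
  refine ((hasFDerivAt_const b 0).add hintegral).congr_of_eventuallyEq
    (Eventually.of_forall fun t => h.snd_eq_integral hf hs t) |>.congr_fderiv ?_
  simp only [zero_mul, zero_smul, add_zero, zero_add]
  rw [intervalIntegral.integral_smul_const]
  refine congrArg (· • _) (intervalIntegral.integral_congr fun u hu => ?_)
  rw [uIcc_of_le hs.1] at hu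
  rw [h.fst_param_zero hf hg (hsub hu), mul_comm]

theorem hasFDerivAt_fst (h : IsRowSolution f g x y a b) (hf : ContinuousOn f (Icc 0 1))
    (hg : ContinuousOn g (Icc 0 1)) {s : ℝ} (hs : s ∈ Icc (0:ℝ) 1) :
    HasFDerivAt (fun t => x (s, t))
      ((∫ u in (0:ℝ)..s, g u * ∫ v in (0:ℝ)..u, f v * (a + b * ∫ r in (0:ℝ)..v, g r)) •
        (1 : ℂ →L[ℝ] ℂ)) 0 := by
  have hsub : Icc 0 s ⊆ Icc (0:ℝ) 1 := Icc_subset_Icc_right hs.2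
  have hy := h.contDiffOn_snd.differentiableOn one_ne_zero
  have hintegral := hasFDerivAt_intervalIntegral_of_continuousOn (a := 0) (b := s)
    (F := fun p => y p * g p.1) (F' := fun p => g p.1 • partialFDerivSnd y (Icc 0 1) p) hs.1
    (fun t => ((h.continuousOn_snd t).mul hg).mono hsub)
    (((hg.comp _root_.continuousOn_fst fun p hp => hp.1).smul
      (h.contDiffOn_snd.continuousOn_partialFDerivSnd (uniqueDiffOn_Icc zero_lt_one))).mono
        (prod_mono_left hsub))
    (fun u hu t => (hy.hasFDerivAt_partialFDerivSnd (hsub hu) t).mul_const (g u)) 0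
  refine ((hasFDerivAt_const a 0).add hintegral).congr_of_eventuallyEq
    (Eventually.of_forall fun t => h.fst_eq_integral hg hs t) |>.congr_fderiv ?_
  rw [zero_add]
  refine (intervalIntegral.integral_congr fun u hu => ?_).trans
    (intervalIntegral.integral_smul_const _ _)
  rw [uIcc_of_le hs.1] at hu
  simp only [(hy.hasFDerivAt_partialFDerivSnd (hsub hu) 0).unique
    (h.hasFDerivAt_snd hf hg (hsub hu)), smul_smul]

end IsRowSolution

/-- The first `t`-derivative of the monodromy `t ↦ X(1,t)` at `t = 0`, given entrywise by
iterated integrals (from the proof of Lemma 2.5). -/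
theorem first_derivative_of_monodromy (f g : ℝ → ℂ)
    (hf : ContinuousOn f (Set.Icc 0 1)) (hg : ContinuousOn g (Set.Icc 0 1))
    (X : ℝ × ℂ → Matrix (Fin 2) (Fin 2) ℂ)
    (hX : ContDiffOn ℝ 2 X (Set.Icc (0:ℝ) 1 ×ˢ Set.univ))
    (hode : ∀ t : ℂ, ∀ s ∈ Set.Icc (0:ℝ) 1,
      HasDerivWithinAt (fun s' => X (s', t)) (X (s, t) * !![0, t * f s; g s, 0])
        (Set.Icc (0:ℝ) 1) s)
    (hinit : ∀ t : ℂ, X (0, t) = 1) :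
    HasDerivAt (fun t : ℂ => X (1, t))
      !![∫ s in (0:ℝ)..1, g s * ∫ u in (0:ℝ)..s, f u,
           ∫ s in (0:ℝ)..1, f s;
         ∫ s in (0:ℝ)..1, g s * ∫ u in (0:ℝ)..s, f u * ∫ v in (0:ℝ)..u, g v,
           ∫ s in (0:ℝ)..1, f s * ∫ v in (0:ℝ)..s, g v]
      (0 : ℂ) := by
  have hentry (i j : Fin 2) : ContDiffOn ℝ 1 (fun p => X p i j) (Icc 0 1 ×ˢ univ) :=
    contDiffOn_pi.1 (contDiffOn_pi.1 (hX.of_le one_le_two) i) j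
  have hode_entry (t : ℂ) (s : ℝ) (hs : s ∈ Icc (0:ℝ) 1) (i j : Fin 2) :=
    hasDerivWithinAt_pi.1 (hasDerivWithinAt_pi.1 (hode t s hs) i) j
  have hrow (i : Fin 2) : IsRowSolution f g (fun p => X p i 0) (fun p => X p i 1)
      ((1 : Matrix (Fin 2) (Fin 2) ℂ) i 0) ((1 : Matrix (Fin 2) (Fin 2) ℂ) i 1) :=
    ⟨hentry i 0, hentry i 1,
      fun t s hs => by simpa [Matrix.mul_apply] using hode_entry t s hs i 0,
      fun t s hs => by simpa [Matrix.mul_apply] using hode_entry t s hs i 1,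
      fun t => by rw [hinit], fun t => by rw [hinit]⟩
  have h1 : (1:ℝ) ∈ Icc (0:ℝ) 1 := right_mem_Icc.2 zero_le_one
  refine hasDerivAt_pi.2 fun i => hasDerivAt_pi.2 fun j => ?_
  fin_cases i <;> fin_cases j
  · simpa using ((hrow 0).hasFDerivAt_fst hf hg h1).hasDerivAt_of_smul_one
  · simpa using ((hrow 0).hasFDerivAt_snd hf hg h1).hasDerivAt_of_smul_one
  · simpa using ((hrow 1).hasFDerivAt_fst hf hg h1).hasDerivAt_of_smul_one
  · simpa using ((hrow 1).hasFDerivAt_snd hf hg h1).hasDerivAt_of_smul_one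
end

section
/- Let n ≥ 2 be an integer and c a real number. Define I₀ = 2c·∫₀¹ (s·(1 − sⁿ))^(−1/2) ds and I₂ = (2c/n)·∫₀¹ [ (n − 1/2)·s^(2n − 3/2)·(1 − sⁿ)^(1/2) − (n/2)·s^(3n − 3/2)·(1 − sⁿ)^(−1/2) ] ds. Then I₀·I₂ = −8π·c²·(2n − 1)·cot(π/(2n)) / ((n−1)·(3n−1)·(5n−1)). In particular, if c ≠ 0 then I₀·I₂ < 0. -/
open Real

open MeasureTheory intervalIntegral Set

lemma realBeta (u v : ℝ) (hu : 0 < u) (hv : 0 < v) :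
    ∫ x in (0:ℝ)..1, x ^ (u-1) * (1-x) ^ (v-1) = Gamma u * Gamma v / Gamma (u+v) := by
  have key : Complex.Gamma u * Complex.Gamma v
      = Complex.Gamma (u+v) * Complex.betaIntegral u v := by
    have := Complex.Gamma_mul_Gamma_eq_betaIntegral (s := (u:ℂ)) (t := (v:ℂ))
      (by simpa using hu) (by simpa using hv)
    simpa using this
  have hcongr : Complex.betaIntegral u v
      = ((∫ x in (0:ℝ)..1, x ^ (u-1) * (1-x) ^ (v-1) : ℝ) : ℂ) := by
    rw [Complex.betaIntegral, ← intervalIntegral.integral_ofReal]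
    refine intervalIntegral.integral_congr (fun x hx => ?_)
    rw [Set.uIcc_of_le zero_le_one] at hx
    push_cast
    rw [Complex.ofReal_cpow hx.1, Complex.ofReal_cpow (by linarith [hx.2] : (0:ℝ) ≤ 1 - x)]
    push_cast
    ring
  have this2 : Complex.Gamma u * Complex.Gamma v = Complex.Gamma (u+v) * ((∫ x in (0:ℝ)..1, x ^ (u-1) * (1-x) ^ (v-1) : ℝ) : ℂ) := by
    rw [key, hcongr]
  have hG : (Real.Gamma (u+v)) ≠ 0 := (Real.Gamma_pos_of_pos (by linarith)).ne'
  rw [show ((u:ℂ) + v) = ((u + v : ℝ) : ℂ) by push_cast; ring] at this2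
  rw [Complex.Gamma_ofReal, Complex.Gamma_ofReal, Complex.Gamma_ofReal,
    ← Complex.ofReal_mul, ← Complex.ofReal_mul] at this2
  have h3 := Complex.ofReal_inj.mp this2
  field_simp [hG]
  linarith [h3]
lemma realBeta_integrable (u v : ℝ) (hu : 0 < u) (hv : 0 < v) :
    IntervalIntegrable (fun x : ℝ => x ^ (u-1) * (1-x) ^ (v-1)) volume 0 1 := by
  have hc := Complex.betaIntegral_convergent (u := (u:ℂ)) (v := (v:ℂ))
    (by simpa using hu) (by simpa using hv)
  have hn := hc.norm
  rw [intervalIntegrable_iff_integrableOn_Ioc_of_le zero_le_one] at hn ⊢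
  refine hn.congr_fun (fun x hx => ?_) measurableSet_Ioc
  have hx0 : (0:ℝ) ≤ x := hx.1.le
  have hx1 : (0:ℝ) ≤ 1 - x := by linarith [hx.2]
  show ‖(x:ℂ) ^ ((u:ℂ)-1) * (1-(x:ℂ)) ^ ((v:ℂ)-1)‖ = x ^ (u-1) * (1-x) ^ (v-1)
  rw [show ((u:ℂ) - 1) = ((u - 1 : ℝ) : ℂ) by push_cast; ring,
    show ((v:ℂ) - 1) = ((v - 1 : ℝ) : ℂ) by push_cast; ring,
    show (1 - (x:ℂ)) = ((1 - x : ℝ) : ℂ) by push_cast; ring,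
    ← Complex.ofReal_cpow hx0, ← Complex.ofReal_cpow hx1, ← Complex.ofReal_mul,
    Complex.norm_real]
  exact abs_of_nonneg (mul_nonneg (rpow_nonneg hx0 _) (rpow_nonneg hx1 _))

lemma pow_image_Ioo (n : ℕ) (hn : 1 ≤ n) :
    (fun s : ℝ => s ^ n) '' Ioo 0 1 = Ioo 0 1 := by
  ext y
  constructor
  · rintro ⟨x, hx, rfl⟩
    exact ⟨pow_pos hx.1 n, pow_lt_one₀ hx.1.le hx.2 (by omega)⟩
  · intro hy
    refine ⟨y ^ ((n:ℝ)⁻¹), ⟨rpow_pos_of_pos hy.1 _, rpow_lt_one hy.1.le hy.2 (by positivity)⟩, ?_⟩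
    show (y ^ ((n:ℝ)⁻¹)) ^ n = y
    rw [← Real.rpow_natCast (y ^ ((n:ℝ)⁻¹)) n, ← Real.rpow_mul hy.1.le,
      inv_mul_cancel₀ (by positivity : (n:ℝ) ≠ 0), rpow_one]

lemma pow_injOn (n : ℕ) (hn : 1 ≤ n) : InjOn (fun s : ℝ => s ^ n) (Ioo 0 1) := by
  intro x hx y hy h
  exact pow_left_inj₀ hx.1.le hy.1.le (by omega : n ≠ 0) |>.mp (by simpa using h)

lemma key_eqOn (n : ℕ) (hn : 1 ≤ n) (α β : ℝ) {s : ℝ} (hs : s ∈ Ioo (0:ℝ) 1) :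
    |(n:ℝ) * s ^ (n-1)| • ((s^n : ℝ) ^ (α-1) * (1 - s^n) ^ (β-1))
      = (n:ℝ) * (s ^ ((n:ℝ)*α - 1) * (1 - s^n) ^ (β-1)) := by
  have hs0 : (0:ℝ) < s := hs.1
  rw [smul_eq_mul, abs_of_nonneg (by positivity : (0:ℝ) ≤ (n:ℝ) * s ^ (n-1)),
    ← Real.rpow_natCast s n, ← Real.rpow_mul hs0.le,
    ← Real.rpow_natCast s (n-1), Nat.cast_sub hn]
  push_cast
  rw [show ((n:ℝ) * s ^ ((n:ℝ) - 1)) * (s ^ ((n:ℝ)*(α-1)) * (1 - s ^ (n:ℝ)) ^ (β-1))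
      = (n:ℝ) * ((s ^ ((n:ℝ) - 1) * s ^ ((n:ℝ)*(α-1))) * (1 - s ^ (n:ℝ)) ^ (β-1)) by ring,
    ← Real.rpow_add hs0]
  ring_nf

lemma subst_beta (n : ℕ) (hn : 1 ≤ n) (α β : ℝ) :
    ∫ x in (0:ℝ)..1, x ^ (α-1) * (1-x) ^ (β-1)
      = ∫ s in (0:ℝ)..1, (n:ℝ) * (s ^ ((n:ℝ)*α - 1) * (1 - s^n) ^ (β-1)) := by
  rw [intervalIntegral.integral_of_le zero_le_one, intervalIntegral.integral_of_le zero_le_one,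
    integral_Ioc_eq_integral_Ioo, integral_Ioc_eq_integral_Ioo]
  conv_lhs => rw [← pow_image_Ioo n hn]
  rw [integral_image_eq_integral_abs_deriv_smul measurableSet_Ioo
      (fun x _ => (hasDerivAt_pow n x).hasDerivWithinAt) (pow_injOn n hn)]
  exact setIntegral_congr_fun measurableSet_Ioo (fun s hs => key_eqOn n hn α β hs)

lemma J_eval (n : ℕ) (hn : 1 ≤ n) (α β : ℝ) (hα : 0 < α) (hβ : 0 < β) :
    ∫ s in (0:ℝ)..1, s ^ ((n:ℝ)*α - 1) * (1 - s^n) ^ (β-1)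
      = (1/n) * (Gamma α * Gamma β / Gamma (α+β)) := by
  have h := subst_beta n hn α β
  rw [intervalIntegral.integral_const_mul, realBeta α β hα hβ] at h
  have hn0 : (n:ℝ) ≠ 0 := by positivity
  field_simp at h ⊢
  linarith

lemma J_integrable (n : ℕ) (hn : 1 ≤ n) (α β : ℝ) (hα : 0 < α) (hβ : 0 < β) :
    IntervalIntegrable (fun s : ℝ => s ^ ((n:ℝ)*α - 1) * (1 - s^n) ^ (β-1)) volume 0 1 := by
  have hb := realBeta_integrable α β hα hβ
  rw [intervalIntegrable_iff_integrableOn_Ioc_of_le zero_le_one] at hb ⊢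
  have hb' : IntegrableOn (fun x : ℝ => x ^ (α-1) * (1-x) ^ (β-1)) (Ioo 0 1) volume :=
    hb.mono_set Ioo_subset_Ioc_self
  rw [← pow_image_Ioo n hn,
    integrableOn_image_iff_integrableOn_abs_deriv_smul measurableSet_Ioo
      (fun x _ => (hasDerivAt_pow n x).hasDerivWithinAt) (pow_injOn n hn)] at hb'
  have hb2 : IntegrableOn (fun s : ℝ => (n:ℝ) * (s ^ ((n:ℝ)*α - 1) * (1 - s^n) ^ (β-1)))
      (Ioo 0 1) volume :=
    hb'.congr_fun (fun s hs => key_eqOn n hn α β hs) measurableSet_Ioo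
  have hn0 : (n:ℝ) ≠ 0 := by positivity
  have hb3 : IntegrableOn (fun s : ℝ => s ^ ((n:ℝ)*α - 1) * (1 - s^n) ^ (β-1))
      (Ioo 0 1) volume := by
    have h4 : IntegrableOn (fun s : ℝ => (n:ℝ)⁻¹ * ((n:ℝ) * (s ^ ((n:ℝ)*α - 1) * (1 - s^n) ^ (β-1))))
        (Ioo 0 1) volume := hb2.const_mul ((n:ℝ)⁻¹)
    refine h4.congr_fun (fun s _ => ?_) measurableSet_Ioo
    field_simp
  exact hb3.congr_set_ae Ioo_ae_eq_Ioc.symm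


set_option maxHeartbeats 2000000 in
/-- Explicit evaluation of the product `I₀·I₂` of iterated integrals for the hyperelliptic
curve `w² = z(1−zⁿ)` (proof of Theorem 3.1):
`I₀I₂ = −8πc²(2n−1)cot(π/(2n)) / ((n−1)(3n−1)(5n−1)) < 0` for `c ≠ 0`. -/
theorem I0_I2_evaluation (n : ℕ) (hn : 2 ≤ n) (c : ℝ)
    (I₀ I₂ : ℝ)
    (hI₀ : I₀ = 2 * c * ∫ s in (0:ℝ)..1, (s * (1 - s ^ n)) ^ (-(1/2) : ℝ))
    (hI₂ : I₂ = (2 * c / n) * ∫ s in (0:ℝ)..1,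
        (((n : ℝ) - 1/2) * s ^ (2 * (n : ℝ) - 3/2) * (1 - s ^ n) ^ ((1:ℝ)/2)
          - ((n : ℝ)/2) * s ^ (3 * (n : ℝ) - 3/2) * (1 - s ^ n) ^ (-(1/2) : ℝ))) :
    I₀ * I₂ = -8 * π * c ^ 2 * (2 * (n : ℝ) - 1) * Real.cot (π / (2 * n)) /
        (((n : ℝ) - 1) * (3 * (n : ℝ) - 1) * (5 * (n : ℝ) - 1)) ∧
      (c ≠ 0 → I₀ * I₂ < 0) := by
  have hn1 : 1 ≤ n := by omega
  obtain ⟨N, hNdef⟩ : ∃ N : ℝ, (n:ℝ) = N := ⟨_, rfl⟩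
  rw [hNdef] at hI₂ ⊢
  have hN2 : (2:ℝ) ≤ N := by rw [← hNdef]; exact_mod_cast hn
  have hN0 : N ≠ 0 := by linarith
  obtain ⟨a, hadef⟩ : ∃ a : ℝ, 1/(2*N) = a := ⟨_, rfl⟩
  have ha0 : 0 < a := by rw [← hadef]; positivity
  have ha14 : a ≤ 1/4 := by
    rw [← hadef, div_le_div_iff₀ (by linarith) (by norm_num)]
    linarith
  -- Integral for I₀
  have hJ0 : (∫ s in (0:ℝ)..1, (s * (1 - s ^ n)) ^ (-(1/2) : ℝ))
      = (1/N) * (Gamma a * Gamma (1/2) / Gamma (a + 1/2)) := by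
    rw [show (∫ s in (0:ℝ)..1, (s * (1 - s ^ n)) ^ (-(1/2) : ℝ))
        = ∫ s in (0:ℝ)..1, s ^ (N * a - 1) * (1 - s ^ n) ^ ((1/2 : ℝ) - 1) from
      intervalIntegral.integral_congr (fun s hs => ?_)]
    · rw [← hNdef, J_eval n hn1 a (1/2) ha0 (by norm_num), hNdef]
    · rw [Set.uIcc_of_le zero_le_one] at hs
      have h1 : (0:ℝ) ≤ 1 - s ^ n := by
        have := pow_le_one₀ (n := n) hs.1 hs.2; linarith
      rw [Real.mul_rpow hs.1 h1]
      congr 1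
      · congr 1
        rw [← hadef]; field_simp; try ring
      · norm_num
  -- Integral for I₂
  have hint1 : IntervalIntegrable
      (fun s : ℝ => (N - 1/2) * (s ^ (N * (2 - a) - 1) * (1 - s ^ n) ^ ((3/2 : ℝ) - 1)))
      volume 0 1 := by
    have h := (J_integrable n hn1 (2 - a) (3/2) (by linarith) (by norm_num)).const_mul (N - 1/2)
    rw [hNdef] at h; exact h
  have hint2 : IntervalIntegrable
      (fun s : ℝ => (N/2) * (s ^ (N * (3 - a) - 1) * (1 - s ^ n) ^ ((1/2 : ℝ) - 1)))
      volume 0 1 := by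
    have h := (J_integrable n hn1 (3 - a) (1/2) (by linarith) (by norm_num)).const_mul (N/2)
    rw [hNdef] at h; exact h
  have hJ2 : (∫ s in (0:ℝ)..1,
        ((N - 1/2) * s ^ (2 * N - 3/2) * (1 - s ^ n) ^ ((1:ℝ)/2)
          - (N/2) * s ^ (3 * N - 3/2) * (1 - s ^ n) ^ (-(1/2) : ℝ)))
      = (N - 1/2) * ((1/N) * (Gamma (2 - a) * Gamma (3/2) / Gamma ((2 - a) + 3/2)))
        - (N/2) * ((1/N) * (Gamma (3 - a) * Gamma (1/2) / Gamma ((3 - a) + 1/2))) := by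
    rw [show (∫ s in (0:ℝ)..1,
        ((N - 1/2) * s ^ (2 * N - 3/2) * (1 - s ^ n) ^ ((1:ℝ)/2)
          - (N/2) * s ^ (3 * N - 3/2) * (1 - s ^ n) ^ (-(1/2) : ℝ)))
        = ∫ s in (0:ℝ)..1,
          ((N - 1/2) * (s ^ (N * (2 - a) - 1) * (1 - s ^ n) ^ ((3/2 : ℝ) - 1))
            - (N/2) * (s ^ (N * (3 - a) - 1) * (1 - s ^ n) ^ ((1/2 : ℝ) - 1))) from
      intervalIntegral.integral_congr (fun s hs => ?_)]
    · rw [intervalIntegral.integral_sub hint1 hint2,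
        intervalIntegral.integral_const_mul, intervalIntegral.integral_const_mul, ← hNdef,
        J_eval n hn1 (2 - a) (3/2) (by linarith) (by norm_num),
        J_eval n hn1 (3 - a) (1/2) (by linarith) (by norm_num), hNdef]
    · rw [show N * (2 - a) - 1 = 2 * N - 3/2 by rw [← hadef]; field_simp; try ring,
        show N * (3 - a) - 1 = 3 * N - 3/2 by rw [← hadef]; field_simp; try ring,
        show (3/2 : ℝ) - 1 = 1/2 by norm_num,
        show (1/2 : ℝ) - 1 = -(1/2) by norm_num]
      ring
  -- Gamma function manipulations
  have hg1a : (0:ℝ) < Gamma (1 - a) := Gamma_pos_of_pos (by linarith)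
  have hgha : (0:ℝ) < Gamma (1/2 - a) := Gamma_pos_of_pos (by linarith)
  have hgah : (0:ℝ) < Gamma (a + 1/2) := Gamma_pos_of_pos (by linarith)
  have hga : (0:ℝ) < Gamma a := Gamma_pos_of_pos ha0
  have hG2 : Gamma (2 - a) = (1 - a) * Gamma (1 - a) := by
    rw [show (2:ℝ) - a = (1 - a) + 1 by ring, Real.Gamma_add_one (by linarith)]
  have hG3 : Gamma (3 - a) = (2 - a) * ((1 - a) * Gamma (1 - a)) := by
    rw [show (3:ℝ) - a = (2 - a) + 1 by ring, Real.Gamma_add_one (by linarith), hG2]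
  have hG72 : Gamma ((2 - a) + 3/2) = (5/2 - a) * ((3/2 - a) * ((1/2 - a) * Gamma (1/2 - a))) := by
    rw [show (2:ℝ) - a + 3/2 = (5/2 - a) + 1 by ring, Real.Gamma_add_one (by linarith),
      show (5/2:ℝ) - a = (3/2 - a) + 1 by ring, Real.Gamma_add_one (by linarith),
      show (3/2:ℝ) - a = (1/2 - a) + 1 by ring, Real.Gamma_add_one (by linarith)]
    try ring
  have hG72' : Gamma ((3 - a) + 1/2) = (5/2 - a) * ((3/2 - a) * ((1/2 - a) * Gamma (1/2 - a))) := by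
    rw [show (3:ℝ) - a + 1/2 = (2 - a) + 3/2 by ring]; exact hG72
  have hG32 : Gamma (3/2 : ℝ) = (1/2) * Gamma (1/2) := by
    rw [show (3/2:ℝ) = (1/2) + 1 by ring, Real.Gamma_add_one (by norm_num)]
  have hg12 : Gamma (1/2 : ℝ) * Gamma (1/2 : ℝ) = π := by
    rw [Real.Gamma_one_half_eq]; exact Real.mul_self_sqrt pi_pos.le
  -- trig facts
  have hπa : 0 < π * a := mul_pos pi_pos ha0
  have hπa2 : π * a < π / 2 := by
    calc π * a ≤ π * (1/4) := by nlinarith [pi_pos]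
    _ < π / 2 := by nlinarith [pi_pos]
  have hS : 0 < Real.sin (π * a) := Real.sin_pos_of_pos_of_lt_pi hπa (by nlinarith [pi_pos])
  have hC : 0 < Real.cos (π * a) := Real.cos_pos_of_mem_Ioo ⟨by nlinarith [pi_pos], hπa2⟩
  have hrefl1 : Gamma a * Gamma (1 - a) = π / Real.sin (π * a) :=
    Real.Gamma_mul_Gamma_one_sub a
  have hrefl2 : Gamma (a + 1/2) * Gamma (1/2 - a) = π / Real.cos (π * a) := by
    have := Real.Gamma_mul_Gamma_one_sub (a + 1/2)
    rw [show (1:ℝ) - (a + 1/2) = 1/2 - a by ring] at this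
    rw [this, show π * (a + 1/2) = π * a + π / 2 by ring, Real.sin_add_pi_div_two]
  have hgaval : Gamma a = π / (Real.sin (π * a) * Gamma (1 - a)) := by
    rw [eq_div_iff (mul_ne_zero hS.ne' hg1a.ne')]
    rw [eq_div_iff hS.ne'] at hrefl1
    linear_combination hrefl1
  have hgahval : Gamma (a + 1/2) = π / (Real.cos (π * a) * Gamma (1/2 - a)) := by
    rw [eq_div_iff (mul_ne_zero hC.ne' hgha.ne')]
    rw [eq_div_iff hC.ne'] at hrefl2
    linear_combination hrefl2
  -- putting it together
  have hcot : Real.cot (π / (2 * N)) = Real.cos (π * a) / Real.sin (π * a) := by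
    rw [show π / (2 * N) = π * a by rw [← hadef]; ring, Real.cot_eq_cos_div_sin]
  have hval : I₀ * I₂ = -8 * π * c ^ 2 * (2 * N - 1) * Real.cot (π / (2 * N)) /
      ((N - 1) * (3 * N - 1) * (5 * N - 1)) := by
    rw [hI₀, hI₂, hJ0, hJ2, hG2, hG3, hG72, hG72', hG32, hgaval, hgahval, hcot]
    have h1 : (1:ℝ) - a ≠ 0 := by linarith
    have h2 : (1:ℝ)/2 - a ≠ 0 := by linarith
    have h3 : (3:ℝ)/2 - a ≠ 0 := by linarith
    have h4 : (5:ℝ)/2 - a ≠ 0 := by linarith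
    have h5 : N - 1 ≠ 0 := by linarith
    have h6 : 3*N - 1 ≠ 0 := by linarith
    have h7 : 5*N - 1 ≠ 0 := by linarith
    obtain ⟨G1, hG1e⟩ : ∃ x, Gamma (1 - a) = x := ⟨_, rfl⟩
    obtain ⟨G2, hG2e⟩ : ∃ x, Gamma (1/2 - a) = x := ⟨_, rfl⟩
    obtain ⟨G0, hG0e⟩ : ∃ x, Gamma ((1:ℝ)/2) = x := ⟨_, rfl⟩
    obtain ⟨S, hSe⟩ : ∃ x, Real.sin (π * a) = x := ⟨_, rfl⟩
    obtain ⟨C, hCe⟩ : ∃ x, Real.cos (π * a) = x := ⟨_, rfl⟩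
    have hG10 : G1 ≠ 0 := hG1e ▸ hg1a.ne'
    have hG20 : G2 ≠ 0 := hG2e ▸ hgha.ne'
    have hG00 : G0 ≠ 0 := hG0e ▸ (Gamma_pos_of_pos (by norm_num : (0:ℝ) < 1/2)).ne'
    have hS0 : S ≠ 0 := hSe ▸ hS.ne'
    have hC0 : C ≠ 0 := hCe ▸ hC.ne'
    have hπe : π = G0 * G0 := by rw [← hG0e]; exact hg12.symm
    have h2N : (2:ℝ)*N - 1 ≠ 0 := by linarith
    have h4N : (4:ℝ)*N - 1 ≠ 0 := by linarith
    rw [hG1e, hG2e, hG0e, hSe, hCe, ← hadef, hπe,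
      show (1:ℝ) - 1/(2*N) = (2*N-1)/(2*N) by field_simp,
      show (2:ℝ) - 1/(2*N) = (4*N-1)/(2*N) by field_simp; try ring,
      show (1:ℝ)/2 - 1/(2*N) = (N-1)/(2*N) by field_simp; try ring,
      show (3:ℝ)/2 - 1/(2*N) = (3*N-1)/(2*N) by field_simp; try ring,
      show (5:ℝ)/2 - 1/(2*N) = (5*N-1)/(2*N) by field_simp; try ring]
    field_simp
    ring
  refine ⟨hval, fun hc => ?_⟩
  rw [hval]
  apply div_neg_of_neg_of_pos
  · have hcotpos : 0 < Real.cot (π / (2 * N)) := by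
      rw [hcot]; positivity
    have hc2 : 0 < c ^ 2 := by positivity
    have hkey : 0 < π * c ^ 2 * (2 * N - 1) * Real.cot (π / (2 * N)) :=
      mul_pos (mul_pos (mul_pos pi_pos hc2) (by linarith)) hcotpos
    nlinarith [hkey]
  · have : (0:ℝ) < N - 1 := by linarith
    have : (0:ℝ) < 3*N - 1 := by linarith
    have : (0:ℝ) < 5*N - 1 := by linarith
    positivity
end

section
/- Let M ∈ Matrix (Fin 2) (Fin 2) ℂ be a matrix all of whose entries are real, with det M = 1 and M₀₀ = M₁₁. Suppose there is a real number v > 0 such that M₁₀ = −v·M₀₁. Then for h = diagonal matrix diag(v^(1/4), v^(−1/4)), the conjugate h·M·h⁻¹ lies in SU(2), i.e. it is unitary with determinant 1. -/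
/-- Diagonal unitarisation (core of of the proof of Theorem 3.1): if `M ∈ SL₂` has real
entries, equal diagonal entries, and `M₁₀ = −v·M₀₁` for some real `v > 0`, then conjugating
by `h = diag(v^(1/4), v^(−1/4))` produces a matrix in `SU(2)`. -/
theorem diagonal_unitariser (M : Matrix (Fin 2) (Fin 2) ℂ)
    (hreal : ∀ i j, (M i j).im = 0)
    (hdet : M.det = 1)
    (hdiag : M 0 0 = M 1 1)
    (v : ℝ) (hv : 0 < v)
    (hoff : M 1 0 = -(v : ℂ) * M 0 1)
    (h : Matrix (Fin 2) (Fin 2) ℂ)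
    (hh : h = Matrix.diagonal ![((v ^ ((1:ℝ)/4) : ℝ) : ℂ), ((v ^ (-(1:ℝ)/4) : ℝ) : ℂ)]) :
    h * M * h⁻¹ ∈ Matrix.unitaryGroup (Fin 2) ℂ ∧ (h * M * h⁻¹).det = 1 := by
  obtain ⟨s, t, hst, hs4, hheta⟩ :
      ∃ s t : ℝ, s * t = 1 ∧ s ^ 4 = v ∧ h = !![(s:ℂ), 0; 0, (t:ℂ)] := by
    refine ⟨v ^ ((1:ℝ)/4), v ^ (-(1:ℝ)/4), ?_, ?_, ?_⟩
    · rw [← Real.rpow_add hv]; norm_num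
    · rw [← Real.rpow_natCast (v ^ ((1:ℝ)/4)) 4, ← Real.rpow_mul hv.le]; norm_num
    · rw [hh]; ext i j; fin_cases i <;> fin_cases j <;> simp [Matrix.diagonal]
  obtain ⟨a, b, ha, hb⟩ : ∃ a b : ℂ, M 0 0 = a ∧ M 0 1 = b := ⟨_, _, rfl, rfl⟩
  have hca : (starRingEnd ℂ) a = a := by
    rw [← ha]; exact Complex.conj_eq_iff_im.mpr (hreal 0 0)
  have hcb : (starRingEnd ℂ) b = b := by
    rw [← hb]; exact Complex.conj_eq_iff_im.mpr (hreal 0 1)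
  have hMeta : M = !![a, b; -(v:ℂ) * b, a] := by
    rw [Matrix.eta_fin_two M, hoff, ← hdiag, ha, hb]
  have hstC : (s:ℂ) * (t:ℂ) = 1 := by exact_mod_cast hst
  have hS4 : (s:ℂ) ^ 4 = (v:ℂ) := by exact_mod_cast hs4
  have hvt2 : (v:ℂ) * (t:ℂ) ^ 2 = (s:ℂ) ^ 2 := by
    linear_combination (-(t:ℂ)^2) * hS4 + (s:ℂ)^2 * ((s:ℂ)*(t:ℂ)+1) * hstC
  have hinv : h⁻¹ = !![(t:ℂ), 0; 0, (s:ℂ)] := by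
    apply Matrix.inv_eq_right_inv
    rw [hheta]
    ext i j
    fin_cases i <;> fin_cases j <;>
      simp [Matrix.mul_apply, Fin.sum_univ_two, Matrix.one_apply] <;>
      linear_combination hstC
  have hdet2 : a * a + (v:ℂ) * (b * b) = 1 := by
    have h1 := hdet
    rw [hMeta, Matrix.det_fin_two_of] at h1
    linear_combination h1
  constructor
  · rw [Matrix.mem_unitaryGroup_iff, hinv, hheta, hMeta]
    ext i j
    fin_cases i <;> fin_cases j <;>
      simp [Matrix.mul_apply, Fin.sum_univ_two, Matrix.conjTranspose_apply, hca, hcb,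
        Complex.conj_ofReal, map_mul, map_neg, Matrix.one_apply] <;>
      first
      | linear_combination hdet2 + a*a*((s:ℂ)*(t:ℂ)+1)*hstC + b*b*hS4
      | linear_combination -a*b*(s:ℂ)*(t:ℂ)*hvt2
      | linear_combination a*b*(s:ℂ)*(t:ℂ)*hvt2
      | linear_combination hdet2 + a*a*((s:ℂ)*(t:ℂ)+1)*hstC + b*b*(((v:ℂ)*(t:ℂ)^2 + (s:ℂ)^2)*hvt2 + hS4)
  · rw [Matrix.det_mul, Matrix.det_mul, hdet, hinv, hheta, Matrix.det_fin_two_of,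
      Matrix.det_fin_two_of]
    linear_combination ((s:ℂ)*(t:ℂ)+1) * hstC
end

section
/- Let A ∈ Matrix (Fin 2) (Fin 2) ℂ with det A = 1 and A₁₁ = conj(A₀₀). Suppose there are real numbers r₁, r₂ and a real number v > 0 such that A₀₁ = r₁·(1 + i), A₁₀ = r₂·(1 − i), and r₂ = −v·r₁. Then for h = diagonal matrix diag(v^(1/4), v^(−1/4)), the conjugate h·A·h⁻¹ lies in SU(2), i.e. it is unitary with determinant 1. -/
/-- Unitarisation lemma from the proof of Theorem 4.1: if `A ∈ SL₂` has
`A₁₁ = conj(A₀₀)`, `A₀₁ = r₁(1+i)`, `A₁₀ = r₂(1−i)` with `r₁, r₂` real and `r₂ = −v·r₁`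
for some real `v > 0`, then conjugating by `h = diag(v^(1/4), v^(−1/4))` produces a matrix
in `SU(2)`. -/
theorem unitariser_puncture_monodromy (A : Matrix (Fin 2) (Fin 2) ℂ)
    (hdet : A.det = 1)
    (hdiag : A 1 1 = starRingEnd ℂ (A 0 0))
    (r₁ r₂ v : ℝ) (hv : 0 < v)
    (h01 : A 0 1 = (r₁ : ℂ) * (1 + Complex.I))
    (h10 : A 1 0 = (r₂ : ℂ) * (1 - Complex.I))
    (hr : r₂ = -v * r₁)
    (h : Matrix (Fin 2) (Fin 2) ℂ)
    (hh : h = Matrix.diagonal ![((v ^ ((1:ℝ)/4) : ℝ) : ℂ), ((v ^ (-(1:ℝ)/4) : ℝ) : ℂ)]) :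
    h * A * h⁻¹ ∈ Matrix.unitaryGroup (Fin 2) ℂ ∧ (h * A * h⁻¹).det = 1 := by
  set e : ℝ := v ^ ((1:ℝ)/4) with he
  set f : ℝ := v ^ (-(1:ℝ)/4) with hf
  have hef : e * f = 1 := by
    rw [he, hf, ← Real.rpow_add hv]; norm_num
  have hffv : f * f * v = e * e := by
    rw [he, hf, ← Real.rpow_add hv, ← Real.rpow_add_one hv.ne', ← Real.rpow_add hv]
    norm_num
  have he4 : e * e * (e * e) = v := by
    linear_combination (-(e*e)) * hffv + v*(e*f+1)*hef
  have hefC : ((e:ℂ)) * (f:ℂ) = 1 := by exact_mod_cast hef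
  set s : ℝ := e * e * r₁ with hs
  have hs2 : (s:ℝ)^2 = v * r₁^2 := by rw [hs]; linear_combination (r₁^2) * he4
  have hs2C : ((s:ℂ))^2 = (v:ℂ) * (r₁:ℂ)^2 := by exact_mod_cast hs2
  -- key identity
  rw [Matrix.det_fin_two, h01, h10, hdiag, hr] at hdet
  push_cast at hdet
  have key : A 0 0 * starRingEnd ℂ (A 0 0) + 2*(s:ℂ)^2 = 1 := by
    linear_combination hdet + 2*hs2C + (v:ℂ)*(r₁:ℂ)^2*Complex.I_sq
  -- inverse of h
  have hinv : h⁻¹ = Matrix.diagonal ![((f:ℝ):ℂ), ((e:ℝ):ℂ)] := by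
    apply Matrix.inv_eq_right_inv
    rw [hh, Matrix.diagonal_mul_diagonal]
    ext i j
    fin_cases i <;> fin_cases j <;>
      simp [Matrix.diagonal, Matrix.one_apply, hefC, mul_comm]
  have hB : h * A * h⁻¹ =
      Matrix.of ![![A 0 0, (s:ℂ) * (1 + Complex.I)],
        ![-(s:ℂ) * (1 - Complex.I), starRingEnd ℂ (A 0 0)]] := by
    have hffvC : ((f:ℂ)) * (f:ℂ) * (v:ℂ) = (e:ℂ) * (e:ℂ) := by exact_mod_cast hffv
    rw [hinv, hh]
    ext i j
    fin_cases i <;> fin_cases j <;>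
      simp [Matrix.mul_apply, Fin.sum_univ_two, Matrix.diagonal, h01, h10, hdiag, hr] <;>
      push_cast [hs]
    · linear_combination (A 0 0) * hefC
    · ring
    · linear_combination (r₁:ℂ)*(1-Complex.I)*hffvC
    · linear_combination (starRingEnd ℂ (A 0 0)) * hefC
  constructor
  · rw [Matrix.mem_unitaryGroup_iff, hB]
    ext i j
    fin_cases i <;> fin_cases j <;>
      simp [Matrix.mul_apply, Fin.sum_univ_two, Matrix.one_apply, Matrix.star_apply,
        Matrix.conjTranspose_apply, map_mul, map_add, map_sub, map_neg,
        Complex.conj_ofReal, Complex.conj_I, Complex.conj_conj]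
    · linear_combination key - (s:ℂ)^2*Complex.I_sq
    · ring
    · ring
    · linear_combination key - (s:ℂ)^2*Complex.I_sq
  · rw [hB, Matrix.det_fin_two]
    simp only [Matrix.of_apply, Matrix.cons_val', Matrix.cons_val_zero, Matrix.cons_val_one,
      Matrix.head_cons, Matrix.empty_val', Matrix.cons_val_fin_one, Matrix.head_fin_const]
    linear_combination key - (s:ℂ)^2*Complex.I_sq
end

section
/- Let n ≥ 3 be an integer and let w ≤ 0 be a real number. Then the following are equivalent: (i) for every t ∈ [−4, 0], cos(2π/n) ≤ −cos( (π(n−2)/n)·√(1 + w·t/4) ) ≤ 1; (ii) w ≥ −8n/(n−2)². -/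
open Real Set

/-! Put `α = π(n-2)/n ∈ (0, π)`, so that `cos (2π/n) = -cos α` and `α (n+2)/(n-2) = 2π - α`.
The condition says `cos x ≤ cos α` for every `x = α √(1 + wt/4)`; these `x` fill the interval
`[α, α √(1 - w)]`, and on `[α, 2π]` the inequality `cos x ≤ cos α` holds exactly up to
`x = 2π - α`. So the condition is `α √(1 - w) ≤ 2π - α`, i.e. `1 - w ≤ ((n+2)/(n-2))²`, which is
`w ≥ -8n/(n-2)²` because `(n+2)² - (n-2)² = 8n`. -/

lemma cos_le_cos_iff_le_two_pi_sub {α x : ℝ} (hα₀ : 0 ≤ α) (hαπ : α ≤ π) (hαx : α ≤ x)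
    (hx : x ≤ 2 * π) : cos x ≤ cos α ↔ x ≤ 2 * π - α := by
  rcases le_total x π with hxπ | hπx
  · exact ⟨fun _ ↦ by linarith, fun _ ↦ cos_le_cos_of_nonneg_of_le_pi hα₀ hxπ hαx⟩
  · rw [← cos_two_pi_sub x,
      strictAntiOn_cos.le_iff_ge ⟨by linarith, by linarith⟩ ⟨hα₀, hαπ⟩]
    constructor <;> intro h <;> linarith

lemma forall_cos_le_cos_iff {α X : ℝ} (hα₀ : 0 < α) (hαπ : α ≤ π) (hαX : α ≤ X) :
    (∀ x ∈ Icc α X, cos x ≤ cos α) ↔ X ≤ 2 * π - α := by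
  constructor
  · intro h
    by_contra! hX
    have hx : min X (2 * π) ∈ Icc α X := ⟨le_min hαX (by linarith), min_le_left _ _⟩
    have hle := (cos_le_cos_iff_le_two_pi_sub hα₀.le hαπ hx.1 (min_le_right _ _)).1 (h _ hx)
    have hlt : 2 * π - α < min X (2 * π) := lt_min hX (by linarith)
    linarith
  · intro hX x hx
    exact (cos_le_cos_iff_le_two_pi_sub hα₀.le hαπ hx.1 (by linarith [hx.2])).2
      (hx.2.trans hX)

lemma image_mul_sqrt_one_add_mul_div_four {α w : ℝ} (hα : 0 ≤ α) (hw : w ≤ 0) :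
    (fun t ↦ α * √(1 + w * t / 4)) '' Icc (-4) 0 = Icc α (α * √(1 - w)) := by
  apply Subset.antisymm
  · rintro _ ⟨t, ⟨ht₁, ht₂⟩, rfl⟩
    have hwt : 0 ≤ w * t := mul_nonneg_of_nonpos_of_nonpos hw ht₂
    refine ⟨le_mul_of_one_le_right hα (one_le_sqrt.2 (by linarith)), ?_⟩
    gcongr α * √?_
    nlinarith
  · have hcont : ContinuousOn (fun t : ℝ ↦ α * √(1 + w * t / 4)) (Icc (-4) 0) := by fun_prop
    have hend : 1 + w * -4 / 4 = 1 - w := by ring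
    simpa only [hend, mul_zero, zero_div, add_zero, sqrt_one, mul_one] using
      intermediate_value_Icc' (by norm_num) hcont

lemma sqrt_one_sub_le_iff {r w : ℝ} (hr : 2 < r) :
    √(1 - w) ≤ (r + 2) / (r - 2) ↔ -8 * r / (r - 2) ^ 2 ≤ w := by
  have hr₂ : r - 2 ≠ 0 := by linarith
  have hsq : ((r + 2) / (r - 2)) ^ 2 = 1 + 8 * r / (r - 2) ^ 2 := by
    field_simp
    ring
  rw [sqrt_le_left (div_nonneg (by linarith) (by linarith)), hsq, neg_mul, neg_div]
  constructor <;> intro h <;> linarith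

/-- Characterisation of the admissible weights (proof of Theorem 5.1): for `n ≥ 3` and
`w ≤ 0`, the unitarisability condition
`cos(2π/n) ≤ −cos((π(n−2)/n)√(1 + wt/4)) ≤ 1` holds for every `t ∈ [−4,0]` iff
`w ≥ −8n/(n−2)²`. -/
theorem admissible_weights (n : ℕ) (hn : 3 ≤ n) (w : ℝ) (hw : w ≤ 0) :
    (∀ t ∈ Set.Icc (-4 : ℝ) 0,
        Real.cos (2 * π / n) ≤
            -Real.cos ((π * ((n : ℝ) - 2) / n) * Real.sqrt (1 + w * t / 4)) ∧
          -Real.cos ((π * ((n : ℝ) - 2) / n) * Real.sqrt (1 + w * t / 4)) ≤ 1) ↔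
      -8 * (n : ℝ) / ((n : ℝ) - 2) ^ 2 ≤ w := by
  have hn₂ : (2 : ℝ) < n := by exact_mod_cast hn
  set α := π * ((n : ℝ) - 2) / n with hα
  have hα₀ : 0 < α := div_pos (mul_pos pi_pos (by linarith)) (by linarith)
  have hαπ : α ≤ π := by
    rw [hα, div_le_iff₀ (by linarith)]
    nlinarith [pi_pos]
  have hcos : cos (2 * π / n) = -cos α := by
    rw [← cos_pi_sub, hα]
    congr 1
    field_simp
    ring
  have hend : 2 * π - α = α * ((n + 2) / (n - 2)) := by
    have hn₂' : (n : ℝ) - 2 ≠ 0 := by linarith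
    rw [hα]
    field_simp
    ring
  have hsqrt : 1 ≤ √(1 - w) := one_le_sqrt.2 (by linarith)
  have hrange : (∀ t ∈ Icc (-4 : ℝ) 0, cos (α * √(1 + w * t / 4)) ≤ cos α) ↔
      ∀ x ∈ Icc α (α * √(1 - w)), cos x ≤ cos α := by
    rw [← image_mul_sqrt_one_add_mul_div_four hα₀.le hw, forall_mem_image]
  simp only [hcos, neg_le_neg_iff, neg_le, neg_one_le_cos, and_true]
  rw [hrange, forall_cos_le_cos_iff hα₀ hαπ (le_mul_of_one_le_right hα₀.le hsqrt), hend,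
    mul_le_mul_iff_right₀ hα₀, sqrt_one_sub_le_iff hn₂]
end
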